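/- arXiv:1409.6977 — 6 statements merged into one kernel-verified Lean document; each statement's English description precedes it below -/
import Mathlib

section
/- There is no oracle Turing machine M such that for every computable binary sequence x and every natural number k ≥ K(x) (where K(x) is the length of a shortest program computing x), M with oracle the sequence 0^k 1 x halts and outputs an index e with φ_e computing x. (That is, one cannot uniformly compute a Markov-name of x from a Type-2 name of x together with an upper bound on its Kolmogorov complexity.) -/
/-- The standard enumeration of partial computable functions. -/
noncomputable def phi (e : ℕ) : ℕ →. ℕ := (Denumerable.ofNat Nat.Partrec.Code e).eval

/-- The e-th computably enumerable set. -/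
def W (e : ℕ) : Set ℕ := (phi e).Dom

/-- `e` is a program (Markov-name) for the binary sequence `x`. -/
def computesSeq (e : ℕ) (x : ℕ → Bool) : Prop :=
  ∀ n, phi e n = Part.some (cond (x n) 1 0)

/-- Kolmogorov complexity of a computable binary sequence: least binary length of a program. -/
noncomputable def Kseq (x : ℕ → Bool) : ℕ := sInf (Nat.size '' {e | computesSeq e x})

/-- The finite prefix of length `m` of the oracle `f`. -/
def pref (f : ℕ → ℕ) (m : ℕ) : List ℕ := (List.range m).map f

/-- The finite prefix of length `m` of a boolean oracle. -/
def prefB (f : ℕ → Bool) (m : ℕ) : List Bool := (List.range m).map f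

/-- The oracle sequence `0^k 1 x`. -/
def oracleSeq (k : ℕ) (x : ℕ → Bool) : ℕ → ℕ :=
  fun i => if i < k then 0 else if i = k then 1 else cond (x (i - k - 1)) 1 0

/-!
Suppose `M` exists. By Kleene's recursion theorem there is an index `k` which searches for the
first stage `t` at which `M` halts on the oracle `0^k 1 0^ω` and then computes the step sequence
`y = 0^t 1^ω`. Since `K(0^ω) = 0 ≤ k`, that search succeeds, and `M` answers there with a name of
`0^ω`. But `k` is a name of `y`, so `K(y) ≤ k`, and the oracle `0^k 1 y` agrees with
`0^k 1 0^ω` on its first `t` entries: `M` gives the same answer, which then names both `0^ω`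
and `y`, although they differ at `t`.
-/

open Nat.Partrec (Code)

theorem pref_prefix (f : ℕ → ℕ) {a b : ℕ} (h : a ≤ b) : pref f a <+: pref f b := by
  have : List.range a <+: List.range b := by
    simpa [List.take_range, Nat.min_eq_left h] using List.take_prefix a (List.range b)
  exact this.map f

theorem pref_congr {m : ℕ} {f g : ℕ → ℕ} (h : ∀ i < m, f i = g i) : pref f m = pref g m :=
  List.map_congr_left fun i hi => h i (List.mem_range.mp hi)

theorem pref_oracleSeq_congr (k : ℕ) {m : ℕ} {x x' : ℕ → Bool} (h : ∀ i < m, x i = x' i) :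
    pref (oracleSeq k x) m = pref (oracleSeq k x') m :=
  pref_congr fun i hi => by
    unfold oracleSeq
    split_ifs
    · rfl
    · rfl
    · rw [h _ (by omega)]

theorem Primrec.pref_oracleSeq {x : ℕ → Bool} (hx : Primrec x) :
    Primrec₂ fun k m => pref (oracleSeq k x) m := by
  have hentry : Primrec₂ fun (p : ℕ × ℕ) (i : ℕ) => oracleSeq p.1 x i := by
    refine Primrec.ite (Primrec.nat_lt.comp Primrec.snd (Primrec.fst.comp Primrec.fst))
      (Primrec.const 0) (Primrec.ite
        (Primrec.eq.comp Primrec.snd (Primrec.fst.comp Primrec.fst)) (Primrec.const 1)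
        (Primrec.cond ?_ (Primrec.const 1) (Primrec.const 0)))
    exact hx.comp (Primrec.nat_sub.comp
      (Primrec.nat_sub.comp Primrec.snd (Primrec.fst.comp Primrec.fst)) (Primrec.const 1))
  exact Primrec.list_map (Primrec.list_range.comp Primrec.snd) hentry

section Machines

variable {M : List ℕ → Option ℕ}

theorem eq_of_pref_eq_some (hM : ∀ l l' y, M l = some y → M (l ++ l') = some y)
    {f : ℕ → ℕ} {a b y y' : ℕ} (ha : M (pref f a) = some y) (hb : M (pref f b) = some y') :
    y = y' := by
  wlog hab : a ≤ b generalizing a b y y'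
  · exact (this hb ha (le_of_not_ge hab)).symm
  obtain ⟨r, hr⟩ := pref_prefix f hab
  rw [← hr, hM _ r y ha] at hb
  exact Option.some_inj.mp hb

def haltStage (M : List ℕ → Option ℕ) (f : ℕ → ℕ) : Part ℕ :=
  Nat.rfind fun m => (M (pref f m)).isSome

theorem exists_mem_haltStage {f : ℕ → ℕ} {m e : ℕ} (h : M (pref f m) = some e) :
    ∃ t ∈ haltStage M f, ∃ e', M (pref f t) = some e' := by
  obtain ⟨t, ht, -⟩ := Nat.rfind_min' (p := fun m => (M (pref f m)).isSome) (by rw [h]; rfl)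
  exact ⟨t, ht, Option.isSome_iff_exists.mp (by simpa using Nat.rfind_spec ht)⟩

theorem partrec_haltStage {F : ℕ → ℕ → ℕ} (hM : Computable M)
    (hF : Computable₂ fun k m => pref (F k) m) : Partrec fun k => haltStage M (F k) :=
  Partrec.rfind (Primrec.option_isSome.to_comp.comp (hM.comp hF)).to₂.partrec₂

end Machines

theorem computesSeq_const_false : computesSeq 0 fun _ => false := by
  intro n
  show (Denumerable.ofNat Code (Encodable.encode Code.zero)).eval n = _
  rw [Denumerable.ofNat_encode]
  rfl

theorem computesSeq.unique {e : ℕ} {x x' : ℕ → Bool} (h : computesSeq e x)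
    (h' : computesSeq e x') : x = x' := by
  funext n
  have := Part.some_inj.mp ((h n).symm.trans (h' n))
  cases hx : x n <;> cases hx' : x' n <;> simp_all

theorem Kseq_le_of_computesSeq {e : ℕ} {x : ℕ → Bool} (h : computesSeq e x) : Kseq x ≤ e :=
  (Nat.sInf_le (Set.mem_image_of_mem _ h)).trans (Nat.size_le.mpr Nat.lt_two_pow_self)

theorem exists_computesSeq_step {g : ℕ →. ℕ} (hg : Partrec g) :
    ∃ k, ∀ t ∈ g k, computesSeq k fun n => decide (t ≤ n) := by
  have hF : Partrec₂ fun (c : Code) (n : ℕ) =>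
      (g (Encodable.encode c)).map fun t => cond (decide (t ≤ n)) 1 0 :=
    (hg.comp (Computable.encode.comp Computable.fst)).map
      (Primrec.cond (Primrec.nat_le.decide.comp Primrec.snd (Primrec.snd.comp Primrec.fst))
        (Primrec.const 1) (Primrec.const 0)).to_comp
  obtain ⟨c, hc⟩ := Code.fixed_point₂ hF
  refine ⟨Encodable.encode c, fun t ht n => ?_⟩
  change (Denumerable.ofNat Code (Encodable.encode c)).eval n = _
  simp only [Denumerable.ofNat_encode, hc, Part.eq_some_iff.mpr ht, Part.map_some]

/-- There is no oracle Turing machine (modelled as a computable monotone map on finite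
oracle prefixes) which, with oracle `0^k 1 x` for any computable binary sequence `x` and any
`k ≥ K(x)`, halts and outputs an index `e` with `φ_e` computing `x`. -/
theorem stmt0 :
    ¬ ∃ M : List ℕ → Option ℕ, Computable M ∧
      (∀ l l' y, M l = some y → M (l ++ l') = some y) ∧
      ∀ x : ℕ → Bool, Computable x → ∀ k, Kseq x ≤ k →
        ∃ m e, M (pref (oracleSeq k x) m) = some e ∧ computesSeq e x := by
  rintro ⟨M, hMcomp, hMmono, hM⟩
  set z : ℕ → Bool := fun _ => false
  obtain ⟨k, hk⟩ := exists_computesSeq_step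
    (partrec_haltStage hMcomp (Primrec.pref_oracleSeq (Primrec.const false)).to_comp)
  obtain ⟨m₀, e₀, hm₀, he₀⟩ := hM z (Computable.const false) k
    ((Kseq_le_of_computesSeq computesSeq_const_false).trans k.zero_le)
  obtain ⟨t, ht, e, he⟩ := exists_mem_haltStage hm₀
  set y : ℕ → Bool := fun n => decide (t ≤ n)
  obtain ⟨m₁, e₁, hm₁, he₁⟩ :=
    hM y (Primrec.nat_le.decide.comp (Primrec.const t) Primrec.id).to_comp k
      (Kseq_le_of_computesSeq (hk t ht))
  have hye : M (pref (oracleSeq k y) t) = some e := by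
    rwa [pref_oracleSeq_congr (x' := z) k fun i hi => by simp [y, z, Nat.not_le.mpr hi]]
  obtain rfl := eq_of_pref_eq_some hMmono hm₀ he
  obtain rfl := eq_of_pref_eq_some hMmono hm₁ hye
  simpa [y, z] using congrFun (he₀.unique he₁) t
end

section
/- Let A ⊆ ℕ be a c.e. set. Then there exist uniformly effective Scott-open sets U_k ⊆ P(ℕ) (each an effective union of basic sets ↑F = {S : F ⊆ S} for finite F) such that for every c.e. set E: (i) if every index of E belongs to A, then E ∈ U_k for all k; and (ii) if no index of E belongs to A, then E ∉ U_k for all k ≥ K(E), where K(E) is the least length of an index of E. -/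
/-- Basic Scott-open set: the collection of supersets of the finite set (listed by) `F`. -/
def upList (F : List ℕ) : Set (Set ℕ) := {S | ∀ x ∈ F, x ∈ S}

/-- A uniformly effective family of Scott-open subsets of `P(ℕ)`:
c.e. unions of basic sets `↑F`, uniformly in the parameter. -/
def EffOpenFamily (U : ℕ → Set (Set ℕ)) : Prop :=
  ∃ R : ℕ × List ℕ → Prop, REPred R ∧ ∀ k, U k = {S | ∃ F, R (k, F) ∧ S ∈ upList F}

/-- Kolmogorov complexity of a c.e. set: least binary length of an index. -/
noncomputable def KW (E : Set ℕ) : ℕ := sInf (Nat.size '' {e | W e = E})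

/-!
Fix an index `a` of `A`. By the recursion theorem there are machines `trap c e j`, uniform in
`e` and `j`, which enumerate `W e` until their own index appears in `A` and from then on enumerate
`W j` as well. `U k` consists of the sets containing, for some `e`, everything enumerated into
`W e` before all the traps `(e, j)` with `j < 2 ^ k` have fired.

If every index of `E = W e` lies in `A`, every trap `(e, j)` fires, since an unfired one would be
an index of `E` outside `A`; hence `E ∈ U k`. If no index of `E` lies in `A` but `E ∈ U k` with
`K(E) ≤ k`, take an index `j < 2 ^ k` of `E`: some trap `(e', j)` has fired, and it enumerates a
subset of `E` together with `W j = E`, so it is an index of `E` in `A`.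
-/

open Nat.Partrec (Code)
open Nat.Partrec.Code Encodable

theorem PrimrecPred.forall_lt_param {α : Type*} [Primcodable α] {p : α → ℕ → Prop} {n : α → ℕ}
    (hn : Primrec n) (hp : PrimrecPred fun q : α × ℕ => p q.1 q.2) :
    PrimrecPred fun a => ∀ x < n a, p a x :=
  ((PrimrecRel.forall_mem_list (R := fun x a => p a x)
    (hp.comp (Primrec.snd.pair Primrec.fst))).comp (Primrec.list_range.comp hn) Primrec.id).of_eq
    fun a => by simp

theorem PrimrecPred.imp {α : Type*} [Primcodable α] {p q : α → Prop} (hp : PrimrecPred p)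
    (hq : PrimrecPred q) : PrimrecPred fun a => p a → q a :=
  (hp.not.or hq).of_eq fun _ => imp_iff_not_or.symm

theorem PrimrecRel.list_mem {α : Type*} [Primcodable α] :
    PrimrecRel fun (x : α) (L : List α) => x ∈ L :=
  ((PrimrecRel.exists_mem_list Primrec.eq).swap).of_eq fun x L => by simp

theorem REPred.exists_nat {α : Type*} [Primcodable α] {p : α → ℕ → Prop}
    (hp : PrimrecPred fun q : α × ℕ => p q.1 q.2) : REPred fun a => ∃ n, p a n := by
  obtain ⟨_, hp⟩ := hp
  refine (Partrec.rfind hp.to_comp.to₂.partrec₂).dom_re.of_eq fun a => ?_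
  simp [Nat.rfind_dom]

theorem exists_W_eq_of_rePred {A : Set ℕ} (hA : REPred (· ∈ A)) : ∃ a, W a = A := by
  obtain ⟨c, hc⟩ := exists_code.1 (Partrec.nat_iff.1 (hA.map (Computable.const 0).to₂))
  refine ⟨encode c, Set.ext fun x => ?_⟩
  simp [W, phi, hc, Part.assert]

theorem exists_code_W_curry_eq {R : Code → ℕ → ℕ → Prop}
    (hR : REPred fun q : Code × ℕ × ℕ => R q.1 q.2.1 q.2.2) :
    ∃ c : Code, ∀ n, W (encode (curry c n)) = {x | R c n x} := by
  have hf : Partrec₂ fun (c : Code) (m : ℕ) =>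
      (Part.assert (R c m.unpair.1 m.unpair.2) fun _ => Part.some ()).map fun _ => 0 :=
    ((hR.comp (Primrec.fst.pair (Primrec.unpair.comp Primrec.snd)).to_comp).map
      (Computable.const 0).to₂).to₂
  obtain ⟨c, hc⟩ := fixed_point₂ hf
  refine ⟨c, fun n => Set.ext fun x => ?_⟩
  simp [W, phi, eval_curry, hc]

def Wstage (i t : ℕ) : Set ℕ := {x | ((Denumerable.ofNat Code i).evaln t x).isSome}

theorem mem_W_iff_exists_mem_Wstage {i x : ℕ} : x ∈ W i ↔ ∃ t, x ∈ Wstage i t := by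
  change (eval _ x).Dom ↔ ∃ t, (evaln t _ x).isSome
  simp only [Part.dom_iff_mem, evaln_complete, Option.isSome_iff_exists, ← Option.mem_def]
  exact exists_comm

theorem Wstage_mono (i : ℕ) : Monotone (Wstage i) := fun _ _ h x hx => by
  simp only [Wstage, Set.mem_ofPred_eq, Option.isSome_iff_exists] at hx ⊢
  exact hx.imp fun _ => evaln_mono h

theorem lt_of_mem_Wstage {i t x : ℕ} (hx : x ∈ Wstage i t) : x < t := by
  obtain ⟨_, hy⟩ := Option.isSome_iff_exists.1 hx
  exact evaln_bound hy

theorem PrimrecPred.mem_Wstage {α : Type*} [Primcodable α] {x i t : α → ℕ}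
    (hx : Primrec x) (hi : Primrec i) (ht : Primrec t) :
    PrimrecPred fun a => x a ∈ Wstage (i a) (t a) :=
  (Primrec.eq.comp (Primrec.option_isSome.comp (primrec_evaln.comp
    ((ht.pair ((Primrec.ofNat Code).comp hi)).pair hx))) (Primrec.const true)).of_eq
    fun _ => Iff.rfl

def trap (c : Code) (e j : ℕ) : ℕ := encode (curry c (Nat.pair e j))

theorem primrec_trap : Primrec fun q : Code × ℕ × ℕ => trap q.1 q.2.1 q.2.2 :=
  Primrec.encode.comp (primrec₂_curry.comp Primrec.fst
    (Primrec₂.natPair.comp (Primrec.fst.comp Primrec.snd) (Primrec.snd.comp Primrec.snd)))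

def enumBefore (a e m : ℕ) : Set ℕ := {x | ∃ t, m ∉ Wstage a t ∧ x ∈ Wstage e t}

theorem enumBefore_eq_W_of_not_mem {a e m : ℕ} (hm : m ∉ W a) : enumBefore a e m = W e := by
  ext x
  rw [mem_W_iff_exists_mem_Wstage] at hm ⊢
  push Not at hm
  exact exists_congr fun t => and_iff_right (hm t)

theorem exists_stage_iff_mem_enumBefore_union {a e j m x : ℕ} :
    (∃ t, (m ∉ Wstage a t ∧ x ∈ Wstage e t) ∨ (m ∈ Wstage a t ∧ x ∈ Wstage j t)) ↔
      x ∈ enumBefore a e m ∪ {x | m ∈ W a ∧ x ∈ W j} := by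
  constructor
  · rintro ⟨t, ⟨hm, hx⟩ | ⟨hm, hx⟩⟩
    · exact Or.inl ⟨t, hm, hx⟩
    · exact Or.inr ⟨mem_W_iff_exists_mem_Wstage.2 ⟨t, hm⟩, mem_W_iff_exists_mem_Wstage.2 ⟨t, hx⟩⟩
  · rintro (⟨t, hm, hx⟩ | ⟨hm, hx⟩)
    · exact ⟨t, Or.inl ⟨hm, hx⟩⟩
    · obtain ⟨t₀, hm⟩ := mem_W_iff_exists_mem_Wstage.1 hm
      obtain ⟨t₁, hx⟩ := mem_W_iff_exists_mem_Wstage.1 hx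
      exact ⟨max t₀ t₁, Or.inr ⟨Wstage_mono a (le_max_left t₀ t₁) hm,
        Wstage_mono j (le_max_right t₀ t₁) hx⟩⟩

/-- The machine `trap c e j` enumerates `W e` until its own index enters `W a`, and from then on
also `W j`. -/
def IsTrapCode (a : ℕ) (c : Code) : Prop :=
  ∀ e j, W (trap c e j) = enumBefore a e (trap c e j) ∪ {x | trap c e j ∈ W a ∧ x ∈ W j}

theorem exists_isTrapCode (a : ℕ) : ∃ c, IsTrapCode a c := by
  let R (c : Code) (n x : ℕ) : Prop := ∃ t,
    (trap c n.unpair.1 n.unpair.2 ∉ Wstage a t ∧ x ∈ Wstage n.unpair.1 t) ∨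
      (trap c n.unpair.1 n.unpair.2 ∈ Wstage a t ∧ x ∈ Wstage n.unpair.2 t)
  have hR : REPred fun q : Code × ℕ × ℕ => R q.1 q.2.1 q.2.2 := by
    refine REPred.exists_nat ?_
    have he : Primrec fun q : (Code × ℕ × ℕ) × ℕ => q.1.2.1.unpair.1 :=
      Primrec.fst.comp (Primrec.unpair.comp (Primrec.fst.comp (Primrec.snd.comp Primrec.fst)))
    have hj : Primrec fun q : (Code × ℕ × ℕ) × ℕ => q.1.2.1.unpair.2 :=
      Primrec.snd.comp (Primrec.unpair.comp (Primrec.fst.comp (Primrec.snd.comp Primrec.fst)))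
    have hx : Primrec fun q : (Code × ℕ × ℕ) × ℕ => q.1.2.2 :=
      Primrec.snd.comp (Primrec.snd.comp Primrec.fst)
    have hm := primrec_trap.comp ((Primrec.fst.comp Primrec.fst).pair (he.pair hj))
    have hfired := PrimrecPred.mem_Wstage hm (Primrec.const a) Primrec.snd
    exact (hfired.not.and (PrimrecPred.mem_Wstage hx he Primrec.snd)).or
      (hfired.and (PrimrecPred.mem_Wstage hx hj Primrec.snd))
  obtain ⟨c, hc⟩ := exists_code_W_curry_eq hR
  refine ⟨c, fun e j => Set.ext fun x => ?_⟩
  have hW := congrArg (x ∈ ·) (hc (Nat.pair e j))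
  simp only [R, Nat.unpair_pair, Set.mem_ofPred_eq] at hW
  rw [trap, hW, ← trap, exists_stage_iff_mem_enumBefore_union]

namespace IsTrapCode

variable {a : ℕ} {c : Code} {e j : ℕ}

theorem W_trap_of_not_mem (hc : IsTrapCode a c) (h : trap c e j ∉ W a) :
    W (trap c e j) = W e := by
  rw [hc e j, enumBefore_eq_W_of_not_mem h]
  simp [h]

theorem W_trap_of_mem (hc : IsTrapCode a c) (h : trap c e j ∈ W a) :
    W (trap c e j) = enumBefore a e (trap c e j) ∪ W j := by
  rw [hc e j]
  simp [h]

end IsTrapCode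

/-- Once every trap has fired by stage `T`, the bounds `t < T` and `x < t` lose nothing (`evaln t`
only accepts inputs below `t`); they make the predicate primitive recursive. -/
def IsTrapWitness (a : ℕ) (c : Code) (k : ℕ) (F : List ℕ) (e T : ℕ) : Prop :=
  ∀ j < 2 ^ k, trap c e j ∈ Wstage a T ∧
    ∀ t < T, trap c e j ∉ Wstage a t → ∀ x < t, x ∈ Wstage e t → x ∈ F

def trapOpen (a : ℕ) (c : Code) (k : ℕ) : Set (Set ℕ) :=
  {S | ∃ F, (∃ e T, IsTrapWitness a c k F e T) ∧ S ∈ upList F}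

theorem primrecPred_isTrapWitness (a : ℕ) (c : Code) :
    PrimrecPred fun q : (ℕ × List ℕ) × ℕ =>
      IsTrapWitness a c q.1.1 q.1.2 q.2.unpair.1 q.2.unpair.2 := by
  have he : Primrec fun q : (ℕ × List ℕ) × ℕ => q.2.unpair.1 :=
    Primrec.fst.comp (Primrec.unpair.comp Primrec.snd)
  have hT : Primrec fun q : (ℕ × List ℕ) × ℕ => q.2.unpair.2 :=
    Primrec.snd.comp (Primrec.unpair.comp Primrec.snd)
  have hpow : Primrec fun q : (ℕ × List ℕ) × ℕ => 2 ^ q.1.1 :=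
    (Primrec₂.unpaired'.1 Nat.Primrec.pow).comp (Primrec.const 2) (Primrec.fst.comp Primrec.fst)
  have htrap : Primrec fun r : ((ℕ × List ℕ) × ℕ) × ℕ => trap c r.1.2.unpair.1 r.2 :=
    primrec_trap.comp ((Primrec.const c).pair ((he.comp Primrec.fst).pair Primrec.snd))
  have hq : Primrec fun u : ((((ℕ × List ℕ) × ℕ) × ℕ) × ℕ) × ℕ => u.1.1.1 :=
    Primrec.fst.comp (Primrec.fst.comp Primrec.fst)
  exact PrimrecPred.forall_lt_param hpow
    ((PrimrecPred.mem_Wstage htrap (Primrec.const a) (hT.comp Primrec.fst)).and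
      (PrimrecPred.forall_lt_param (hT.comp Primrec.fst)
        (PrimrecPred.imp
          (PrimrecPred.mem_Wstage (htrap.comp Primrec.fst) (Primrec.const a) Primrec.snd).not
          (PrimrecPred.forall_lt_param Primrec.snd (PrimrecPred.imp
            (PrimrecPred.mem_Wstage Primrec.snd (he.comp hq) (Primrec.snd.comp Primrec.fst))
            (PrimrecRel.list_mem.comp Primrec.snd (Primrec.snd.comp (Primrec.fst.comp hq))))))))

theorem effOpenFamily_trapOpen (a : ℕ) (c : Code) : EffOpenFamily (trapOpen a c) := by
  refine ⟨fun p => ∃ e T, IsTrapWitness a c p.1 p.2 e T, ?_, fun k => rfl⟩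
  have hw : REPred fun p : ℕ × List ℕ =>
      ∃ y : ℕ, IsTrapWitness a c p.1 p.2 y.unpair.1 y.unpair.2 :=
    REPred.exists_nat (primrecPred_isTrapWitness a c)
  refine hw.of_eq fun p => ⟨fun ⟨y, hy⟩ => ⟨_, _, hy⟩, fun ⟨e, T, h⟩ => ⟨Nat.pair e T, ?_⟩⟩
  simpa only [Nat.unpair_pair] using h

theorem W_mem_trapOpen {a e : ℕ} {c : Code} (hfired : ∀ j, trap c e j ∈ W a) (k : ℕ) :
    W e ∈ trapOpen a c k := by
  classical
  choose t ht using fun j => mem_W_iff_exists_mem_Wstage.1 (hfired j)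
  set T := (Finset.range (2 ^ k)).sup t
  refine ⟨(List.range T).filter (· ∈ Wstage e T), ⟨e, T, fun j hj => ⟨?_, ?_⟩⟩, ?_⟩
  · exact Wstage_mono a (Finset.le_sup (Finset.mem_range.2 hj)) (ht j)
  · intro s hs _ x _ hx
    simpa using ⟨(lt_of_mem_Wstage hx).trans hs, Wstage_mono e hs.le hx⟩
  · intro x hx
    exact mem_W_iff_exists_mem_Wstage.2 ⟨T, of_decide_eq_true (List.mem_filter.1 hx).2⟩

theorem exists_trap_mem_W_and_enumBefore_subset {a j k : ℕ} {c : Code} {S : Set ℕ}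
    (hS : S ∈ trapOpen a c k) (hj : j < 2 ^ k) :
    ∃ e, trap c e j ∈ W a ∧ enumBefore a e (trap c e j) ⊆ S := by
  obtain ⟨F, ⟨e, T, hw⟩, hSF⟩ := hS
  obtain ⟨hT, hF⟩ := hw j hj
  refine ⟨e, mem_W_iff_exists_mem_Wstage.2 ⟨T, hT⟩, ?_⟩
  rintro x ⟨t, ht, hx⟩
  have htT : t < T := lt_of_not_ge fun h => ht (Wstage_mono a h hT)
  exact hSF x (hF t htT ht x (lt_of_mem_Wstage hx) hx)

theorem exists_index_lt_two_pow_of_KW_le {E : Set ℕ} {k : ℕ} (hE : ∃ e, W e = E)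
    (hk : KW E ≤ k) : ∃ j < 2 ^ k, W j = E := by
  obtain ⟨e, he⟩ := hE
  have hne : (Nat.size '' {e | W e = E}).Nonempty := ⟨_, e, he, rfl⟩
  obtain ⟨j, hj, hsize⟩ := Nat.sInf_mem hne
  exact ⟨j, Nat.size_le.1 (hsize.trans_le hk), hj⟩

/-- Basic extension lemma: for every c.e. `A ⊆ ℕ` there are uniformly effective Scott-open
sets `U_k` such that for every c.e. set `E`: if all indices of `E` are in `A` then `E ∈ U_k`
for all `k`, and if no index of `E` is in `A` then `E ∉ U_k` for all `k ≥ K(E)`. -/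
theorem stmt2 (A : Set ℕ) (hA : REPred (· ∈ A)) :
    ∃ U : ℕ → Set (Set ℕ), EffOpenFamily U ∧
      ∀ E : Set ℕ, (∃ e, W e = E) →
        ((∀ e, W e = E → e ∈ A) → ∀ k, E ∈ U k) ∧
        ((∀ e, W e = E → e ∉ A) → ∀ k, KW E ≤ k → E ∉ U k) := by
  obtain ⟨a, rfl⟩ := exists_W_eq_of_rePred hA
  obtain ⟨c, hc⟩ := exists_isTrapCode a
  refine ⟨trapOpen a c, effOpenFamily_trapOpen a c, ?_⟩
  rintro E ⟨e, rfl⟩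
  refine ⟨fun hgood k => W_mem_trapOpen (fun j => ?_) k, fun hbad k hk hE => ?_⟩
  · by_contra hj
    exact hj (hgood _ (hc.W_trap_of_not_mem hj))
  · obtain ⟨j, hj, hjE⟩ := exists_index_lt_two_pow_of_KW_le ⟨e, rfl⟩ hk
    obtain ⟨e', hm, hsub⟩ := exists_trap_mem_W_and_enumBefore_subset hE hj
    refine hbad _ ?_ hm
    rw [hc.W_trap_of_mem hm, hjE, Set.union_eq_right.2 (hjE ▸ hsub)]
end

section
/- A set A of c.e. subsets of ℕ is Markov-semidecidable if and only if it is K-semidecidable. Precisely: there exists a c.e. set I ⊆ ℕ such that for all e, W_e ∈ A ↔ e ∈ I, if and only if there exist uniformly effective Scott-open sets U_k ⊆ P(ℕ) such that for every c.e. set E with K(E) ≤ k, E ∈ A ↔ E ∈ U_k. -/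
/-!
Forward direction (Rice–Shapiro): by the recursion theorem, the class of c.e. sets with an index in
a c.e. index-invariant set `I` is upward closed among c.e. sets, and each of its members has a
finite subset in the class. Hence `A` agrees on all c.e. sets with one effective open set, the
supersets of its finite members, whatever the complexity bound. Conversely,
`e ∈ I :↔ W e ∈ U_{|e|}` is c.e. and agrees with `A`, since `K(W e) ≤ |e|`.
-/

open Nat.Partrec (Code)
open Nat.Partrec.Code Encodable Denumerable Filter

/-- `W_{e,s}`: the inputs on which the `e`-th program halts within `s` steps. -/
def WStage (e s : ℕ) : Set ℕ := {x | (evaln s (ofNat Code e) x).isSome}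

instance decidableMemWStage (e s : ℕ) : DecidablePred (· ∈ WStage e s) := fun x =>
  inferInstanceAs (Decidable ((evaln s (ofNat Code e) x).isSome = true))

theorem mem_W_iff_exists_mem_WStage {e x : ℕ} : x ∈ W e ↔ ∃ s, x ∈ WStage e s := by
  simp only [W, phi, WStage, PFun.mem_dom, Set.mem_ofPred_eq, Option.isSome_iff_exists,
    ← Option.mem_def, evaln_complete]
  exact exists_comm

theorem WStage_mono (e : ℕ) : Monotone (WStage e) := fun _ _ h _ hx => by
  obtain ⟨y, hy⟩ := Option.isSome_iff_exists.1 hx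
  exact Option.isSome_iff_exists.2 ⟨y, evaln_mono h hy⟩

theorem lt_of_mem_WStage {e s x : ℕ} (h : x ∈ WStage e s) : x < s := by
  obtain ⟨y, hy⟩ := Option.isSome_iff_exists.1 h
  exact evaln_bound hy

theorem mem_W_iff_eventually_mem_WStage {e x : ℕ} : x ∈ W e ↔ ∀ᶠ s in atTop, x ∈ WStage e s := by
  rw [mem_W_iff_exists_mem_WStage, eventually_atTop]
  exact exists_congr fun s => ⟨fun h _ hs => WStage_mono e hs h, fun h => h s le_rfl⟩

theorem primrecPred_mem_WStage {α : Type*} [Primcodable α] {e s x : α → ℕ} (he : Primrec e)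
    (hs : Primrec s) (hx : Primrec x) : PrimrecPred fun a => x a ∈ WStage (e a) (s a) :=
  Primrec.primrecPred <| (Primrec.option_isSome.comp <| primrec_evaln.comp <|
    (hs.pair ((Primrec.ofNat Code).comp he)).pair hx).of_eq fun _ => Bool.decide_eq_true.symm

theorem ComputablePred.rePred_exists {α β : Type*} [Primcodable α] [Denumerable β]
    {q : α × β → Prop} (hq : ComputablePred q) : REPred fun a => ∃ b, q (a, b) := by
  classical
  have hsearch : Partrec fun a =>
      Nat.rfind (fun n => Part.some (decide (q (a, ofNat β n))) : ℕ →. Bool) :=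
    Partrec.rfind (hq.decide.comp (Computable.fst.pair
      ((Computable.ofNat β).comp Computable.snd))).partrec
  refine hsearch.dom_re.of_eq fun a => Nat.rfind_dom.trans ?_
  simp only [Part.mem_some_iff, Part.some_dom, implies_true, and_true, eq_comm (a := true),
    decide_eq_true_iff]
  exact ⟨fun ⟨n, hn⟩ => ⟨_, hn⟩, fun ⟨b, hb⟩ => ⟨encode b, by rwa [ofNat_encode]⟩⟩

theorem REPred.exists_index {α : Type*} [Primcodable α] {p : α → Prop} (hp : REPred p) :
    ∃ i, ∀ a, p a ↔ encode a ∈ W i := by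
  obtain ⟨c, hc⟩ := exists_code.1 hp
  refine ⟨encode c, fun a => ?_⟩
  have hca := congrFun hc (encode a)
  rw [encodek, Part.coe_some, Part.bind_some] at hca
  simp [W, phi, hca]

theorem REPred.comp {α β : Type*} [Primcodable α] [Primcodable β] {p : β → Prop}
    (hp : REPred p) {f : α → β} (hf : Computable f) : REPred fun a => p (f a) :=
  Partrec.comp hp hf

section Closure

variable {α : Type*} [Primcodable α] {p q : α → Prop}

theorem REPred.and (hp : REPred p) (hq : REPred q) : REPred fun a => p a ∧ q a := by
  obtain ⟨i, hi⟩ := hp.exists_index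
  obtain ⟨j, hj⟩ := hq.exists_index
  have hstage : PrimrecPred fun r : α × ℕ × ℕ =>
      encode r.1 ∈ WStage i r.2.1 ∧ encode r.1 ∈ WStage j r.2.2 :=
    (primrecPred_mem_WStage (.const i) (.comp .fst .snd) (.comp .encode .fst)).and
      (primrecPred_mem_WStage (.const j) (.comp .snd .snd) (.comp .encode .fst))
  refine (ComputablePred.rePred_exists hstage.computablePred).of_eq fun a => ?_
  simp only [hi, hj, mem_W_iff_exists_mem_WStage, Prod.exists, exists_and_left, exists_and_right]

theorem REPred.or (hp : REPred p) (hq : REPred q) : REPred fun a => p a ∨ q a := by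
  obtain ⟨i, hi⟩ := hp.exists_index
  obtain ⟨j, hj⟩ := hq.exists_index
  have hstage : PrimrecPred fun r : α × ℕ =>
      encode r.1 ∈ WStage i r.2 ∨ encode r.1 ∈ WStage j r.2 :=
    (primrecPred_mem_WStage (.const i) .snd (.comp .encode .fst)).or
      (primrecPred_mem_WStage (.const j) .snd (.comp .encode .fst))
  refine (ComputablePred.rePred_exists hstage.computablePred).of_eq fun a => ?_
  simp only [hi, hj, mem_W_iff_exists_mem_WStage, exists_or]

theorem REPred.exists {β : Type*} [Denumerable β] {p : α × β → Prop} (hp : REPred p) :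
    REPred fun a => ∃ b, p (a, b) := by
  obtain ⟨i, hi⟩ := hp.exists_index
  have hstage : PrimrecPred fun r : α × β × ℕ => encode (r.1, r.2.1) ∈ WStage i r.2.2 :=
    primrecPred_mem_WStage (.const i) (.comp .snd .snd)
      (.comp .encode (.pair .fst (.comp .fst .snd)))
  refine (ComputablePred.rePred_exists hstage.computablePred).of_eq fun a => ?_
  simp only [fun b => hi (a, b), mem_W_iff_exists_mem_WStage, Prod.exists]

end Closure

theorem rePred_mem_W : REPred fun r : ℕ × ℕ => r.2 ∈ W r.1 :=
  (eval_part.comp ((Computable.ofNat Code).comp .fst) .snd).dom_re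

theorem forall_mem_W_iff_exists_forall_mem_WStage {e : ℕ} {F : List ℕ} :
    (∀ x ∈ F, x ∈ W e) ↔ ∃ s, ∀ x ∈ F, x ∈ WStage e s := by
  refine ⟨fun h => ?_, fun ⟨s, hs⟩ x hx => mem_W_iff_exists_mem_WStage.2 ⟨s, hs x hx⟩⟩
  simp only [mem_W_iff_eventually_mem_WStage] at h
  exact ((eventually_all_finite F.finite_toSet).2 h).exists

theorem rePred_forall_mem_W : REPred fun r : ℕ × List ℕ => ∀ x ∈ r.2, x ∈ W r.1 := by
  have hR : PrimrecRel fun (x : ℕ) (es : ℕ × ℕ) => x ∈ WStage es.1 es.2 :=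
    primrecPred_mem_WStage (.comp .fst .snd) (.comp .snd .snd) .fst
  have hstage : PrimrecPred fun r : (ℕ × List ℕ) × ℕ => ∀ x ∈ r.1.2, x ∈ WStage r.1.1 r.2 :=
    hR.forall_mem_list.comp (.comp .snd .fst) (.pair (.comp .fst .fst) .snd)
  exact (ComputablePred.rePred_exists hstage.computablePred).of_eq fun _ => by
    dsimp only
    exact forall_mem_W_iff_exists_forall_mem_WStage.symm

theorem REPred.exists_computable_W {β : Type*} [Primcodable β] {P : β × ℕ → Prop}
    (hP : REPred P) : ∃ f : β → ℕ, Computable f ∧ ∀ b x, x ∈ W (f b) ↔ P (b, x) := by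
  obtain ⟨i, hi⟩ := hP.exists_index
  refine ⟨fun b => encode (curry (ofNat Code i) (encode b)), ?_, fun b x => ?_⟩
  · exact (Primrec.encode.comp (primrec₂_curry.comp (.const _) .encode)).to_comp
  · rw [hi (b, x)]
    simp [W, phi]

theorem REPred.exists_W_fixed_point {P : ℕ × ℕ → Prop} (hP : REPred P) :
    ∃ t, ∀ x, x ∈ W t ↔ P (t, x) := by
  obtain ⟨f, hf, hfW⟩ := hP.exists_computable_W
  obtain ⟨c, hc⟩ := fixed_point ((Computable.ofNat Code).comp (hf.comp Computable.encode))
  refine ⟨encode c, fun x => ?_⟩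
  rw [← hfW]
  simp [W, phi, hc]

theorem exists_computable_W_eq_list :
    ∃ f : List ℕ → ℕ, Computable f ∧ ∀ F, W (f F) = {x | x ∈ F} := by
  have hmem : PrimrecPred fun r : List ℕ × ℕ => r.2 ∈ r.1 :=
    (PrimrecRel.exists_mem_list Primrec.eq).of_eq fun F x => by simp
  obtain ⟨f, hf, hfW⟩ := hmem.computablePred.to_re.exists_computable_W
  exact ⟨f, hf, fun F => Set.ext (hfW F)⟩

section RiceShapiro

variable {A : Set (Set ℕ)} {I : Set ℕ}

theorem mem_of_W_subset (hI : REPred (· ∈ I)) (hA : ∀ e, W e ∈ A ↔ e ∈ I) {e₁ e₂ : ℕ}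
    (h₁ : W e₁ ∈ A) (h : W e₁ ⊆ W e₂) : W e₂ ∈ A := by
  have hP : REPred fun r : ℕ × ℕ => r.2 ∈ W e₁ ∨ (r.1 ∈ I ∧ r.2 ∈ W e₂) :=
    (rePred_mem_W.comp ((Computable.const e₁).pair .snd)).or
      ((hI.comp .fst).and (rePred_mem_W.comp ((Computable.const e₂).pair .snd)))
  -- `W t` is `W e₂` if `t ∈ I` and `W e₁` otherwise; the latter is self-refuting.
  obtain ⟨t, ht⟩ := hP.exists_W_fixed_point
  have htI : t ∈ I := by
    by_contra htI
    have hWt : W t = W e₁ := by ext x; simp [ht, htI]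
    exact htI ((hA t).1 (hWt ▸ h₁))
  have hWt : W t = W e₂ := by ext x; simpa [ht, htI] using @h x
  exact hWt ▸ (hA t).2 htI

theorem exists_list_mem_subset_of_mem (hI : REPred (· ∈ I)) (hA : ∀ e, W e ∈ A ↔ e ∈ I) {e : ℕ}
    (he : W e ∈ A) : ∃ F : List ℕ, {x | x ∈ F} ∈ A ∧ ∀ x ∈ F, x ∈ W e := by
  obtain ⟨i, hi⟩ := hI.exists_index
  have hP : REPred fun r : ℕ × ℕ => ∃ s, r.2 ∈ WStage e s ∧ r.1 ∉ WStage i s :=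
    ComputablePred.rePred_exists ((primrecPred_mem_WStage (.const e) .snd (.comp .snd .fst)).and
      (primrecPred_mem_WStage (.const i) .snd (.comp .fst .fst)).not).computablePred
  -- `W t` follows `W e` until `t` is seen in `I`; it must be seen, after which `W t` is frozen.
  obtain ⟨t, ht⟩ := hP.exists_W_fixed_point
  have hsub : W t ⊆ W e := fun x hx =>
    have ⟨s, hs, _⟩ := (ht x).1 hx
    mem_W_iff_exists_mem_WStage.2 ⟨s, hs⟩
  have htI : t ∈ I := by
    by_contra htI
    have hnever : ∀ s, t ∉ WStage i s := fun s hs =>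
      htI ((hi t).2 (mem_W_iff_exists_mem_WStage.2 ⟨s, hs⟩))
    have hWt : W t = W e := by ext x; simp [ht, hnever, mem_W_iff_exists_mem_WStage]
    exact htI ((hA t).1 (hWt ▸ he))
  obtain ⟨s₀, hs₀⟩ := mem_W_iff_exists_mem_WStage.1 ((hi t).1 htI)
  have hfin : W t ⊆ Set.Iio s₀ := fun x hx => by
    obtain ⟨s, hxs, hts⟩ := (ht x).1 hx
    exact (lt_of_mem_WStage hxs).trans (lt_of_not_ge fun h => hts (WStage_mono i h hs₀))
  obtain ⟨F, hF⟩ : ∃ F : List ℕ, {x | x ∈ F} = W t :=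
    ⟨((Set.finite_Iio s₀).subset hfin).toFinset.toList, by ext; simp⟩
  exact ⟨F, hF ▸ (hA t).2 htI, fun x hx => hsub (hF.subset hx)⟩

theorem W_mem_iff_exists_list (hI : REPred (· ∈ I)) (hA : ∀ e, W e ∈ A ↔ e ∈ I) (e : ℕ) :
    W e ∈ A ↔ ∃ F : List ℕ, {x | x ∈ F} ∈ A ∧ W e ∈ upList F := by
  refine ⟨exists_list_mem_subset_of_mem hI hA, fun ⟨F, hF, hFe⟩ => ?_⟩
  obtain ⟨f, -, hfW⟩ := exists_computable_W_eq_list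
  exact mem_of_W_subset hI hA (e₁ := f F) (hfW F ▸ hF) (hfW F ▸ hFe)

end RiceShapiro

theorem EffOpenFamily.rePred_W_mem {U : ℕ → Set (Set ℕ)} (hU : EffOpenFamily U) :
    REPred fun r : ℕ × ℕ => W r.2 ∈ U r.1 := by
  obtain ⟨R, hR, hUR⟩ := hU
  have hbasic : REPred fun r : (ℕ × ℕ) × List ℕ => R (r.1.1, r.2) ∧ ∀ x ∈ r.2, x ∈ W r.1.2 :=
    (hR.comp ((Computable.fst.comp .fst).pair .snd)).and
      (rePred_forall_mem_W.comp ((Computable.snd.comp .fst).pair .snd))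
  exact hbasic.exists.of_eq fun r => by rw [hUR]; rfl

theorem computable_size : Computable Nat.size := by
  have hpow : Primrec₂ fun a b : ℕ => a ^ b := Primrec₂.unpaired'.1 Nat.Primrec.pow
  have hlt : PrimrecPred fun p : ℕ × ℕ => p.1 < 2 ^ p.2 :=
    Primrec.nat_lt.comp .fst (hpow.comp (.const 2) .snd)
  have hex : ∀ n, ∃ k, n < 2 ^ k := fun n => ⟨_, Nat.lt_size_self n⟩
  refine (Computable.find hlt.computablePred hex).of_eq fun n => ?_
  exact le_antisymm (Nat.find_min' _ (Nat.lt_size_self n)) (Nat.size_le.2 (Nat.find_spec (hex n)))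

theorem KW_W_le_size (e : ℕ) : KW (W e) ≤ Nat.size e :=
  Nat.sInf_le ⟨e, rfl, rfl⟩

/-- A set `A` of c.e. subsets of `ℕ` is Markov-semidecidable (membership semidecidable from
indices, via a c.e. index-invariant set `I`) iff it is K-semidecidable (there are uniformly
effective Scott-open sets `U_k` agreeing with `A` on c.e. sets of complexity `≤ k`). -/
theorem stmt3 (A : Set (Set ℕ)) :
    (∃ I : Set ℕ, REPred (· ∈ I) ∧ ∀ e, (W e ∈ A ↔ e ∈ I)) ↔
    (∃ U : ℕ → Set (Set ℕ), EffOpenFamily U ∧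
      ∀ (k : ℕ) (E : Set ℕ), (∃ e, W e = E) → KW E ≤ k → (E ∈ A ↔ E ∈ U k)) := by
  constructor
  · rintro ⟨I, hI, hA⟩
    obtain ⟨f, hf, hfW⟩ := exists_computable_W_eq_list
    refine ⟨fun _ => {S | ∃ F, {x | x ∈ F} ∈ A ∧ S ∈ upList F},
      ⟨fun r => {x | x ∈ r.2} ∈ A, ?_, fun _ => rfl⟩, ?_⟩
    · exact (hI.comp (hf.comp .snd)).of_eq fun r => by rw [← hA, hfW]
    · rintro k E ⟨e, rfl⟩ -
      exact W_mem_iff_exists_list hI hA e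
  · rintro ⟨U, hU, hAU⟩
    refine ⟨{e | W e ∈ U (Nat.size e)},
      hU.rePred_W_mem.comp (computable_size.pair .id), fun e => ?_⟩
    exact hAU _ _ ⟨e, rfl⟩ (KW_W_le_size e)
end

section
/- If a Markov-semidecidable set A of computable binary sequences is nonempty, then one can compute an element of A; moreover one can compute a sequence of elements of A that is dense in A. Also, nonemptiness of A is semidecidable uniformly in a c.e. index for A. -/
/-- The cylinder of binary sequences extending the finite string `u`. -/
def cyl (u : List Bool) : Set (ℕ → Bool) := {x | ∀ i : Fin u.length, x i.1 = u.get i}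

/-- A uniformly effective family of open subsets of Cantor space: c.e. unions of cylinders. -/
def EffOpenCantorFamily (U : ℕ → Set (ℕ → Bool)) : Prop :=
  ∃ R : ℕ × List Bool → Prop, REPred R ∧ ∀ k, U k = {x | ∃ u, R (k, u) ∧ x ∈ cyl u}

/-- `A` is Markov-semidecidable via the (index-invariant) set `I`:
for any program `e` of a computable sequence `x`, `x ∈ A ↔ e ∈ I`. -/
def MarkovVia (I : Set ℕ) (A : Set (ℕ → Bool)) : Prop :=
  ∀ e x, Computable x → computesSeq e x → (x ∈ A ↔ e ∈ I)

open Encodable Denumerable Nat.Partrec.Code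
open Nat.Partrec (Code)

theorem Nat.rfindOpt_eq_some_of_forall {α : Type*} {f : ℕ → Option α} {b : α}
    (hdom : ∃ n, (f n).isSome) (h : ∀ n, ∀ a ∈ f n, a = b) :
    Nat.rfindOpt f = Part.some b := by
  obtain ⟨n, hn⟩ := hdom
  have hd : (Nat.rfindOpt f).Dom := Nat.rfindOpt_dom.2 ⟨n, _, Option.get_mem hn⟩
  obtain ⟨k, hk⟩ := Nat.rfindOpt_spec (Part.get_mem hd)
  exact Part.eq_some_iff.2 (h k _ hk ▸ Part.get_mem hd)

theorem Nat.Partrec.Code.exists_primrec_fixed_point {α : Type*} [Primcodable α]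
    {f : α → Code → ℕ →. ℕ} (hf : Partrec₂ fun (p : α × Code) n => f p.1 p.2 n) :
    ∃ r : α → Code, Primrec r ∧ ∀ a, eval (r a) = f a (r a) := by
  let g : (α × ℕ) × ℕ →. ℕ := fun p =>
    f p.1.1 (curry (ofNat Code p.1.2) (encode p.1)) p.2
  have hg : Partrec g := hf.comp ((Computable.fst.comp Computable.fst).pair
    (primrec₂_curry.comp ((Primrec.ofNat Code).comp (Primrec.snd.comp Primrec.fst))
      (Primrec.encode.comp Primrec.fst)).to_comp) Computable.snd
  obtain ⟨cg, hcg⟩ := exists_code.1 hg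
  -- `r a` runs `cg` with its own parameter `(a, cg)` built in, so `g` hands it back `r a`.
  refine ⟨fun a => curry cg (encode (a, encode cg)),
    primrec₂_curry.comp (_root_.Primrec.const cg)
      (Primrec.encode.comp (_root_.Primrec.id.pair (_root_.Primrec.const _))),
    fun a => funext fun n => ?_⟩
  simp [eval_curry, hcg, g, encodek, Part.map_id']

@[simp] theorem phi_encode (c : Code) : phi (encode c) = eval c := by
  simp [phi]

def memWAt (i s z : ℕ) : Bool := (evaln s (ofNat Code i) z).isSome

theorem mem_W_iff_exists_memWAt {i z : ℕ} : z ∈ W i ↔ ∃ s, memWAt i s z = true := by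
  rw [W, PFun.mem_dom]
  simp only [phi, memWAt, evaln_complete, Option.isSome_iff_exists, Option.mem_def]
  exact ⟨fun ⟨v, s, h⟩ => ⟨s, v, h⟩, fun ⟨s, v, h⟩ => ⟨v, s, h⟩⟩

theorem primrec_memWAt : Primrec fun p : ℕ × ℕ × ℕ => memWAt p.1 p.2.1 p.2.2 :=
  Primrec.option_isSome.comp <| primrec_evaln.comp <|
    ((Primrec.fst.comp Primrec.snd).pair ((Primrec.ofNat Code).comp Primrec.fst)).pair
      (Primrec.snd.comp Primrec.snd)

theorem exists_computesSeq {x : ℕ → Bool} (hx : Computable x) :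
    ∃ c : Code, computesSeq (encode c) x := by
  obtain ⟨c, hc⟩ := exists_code.1 <| Partrec.nat_iff.1 <|
    (Computable.cond hx (Computable.const 1) (Computable.const 0)).partrec
  exact ⟨c, fun n => by simp [hc]⟩

theorem exists_computable_computesSeq_of_le_one {e : ℕ}
    (h : ∀ n, ∃ v ≤ 1, phi e n = Part.some v) :
    ∃ x : ℕ → Bool, Computable x ∧ computesSeq e x := by
  choose v hv1 hv using h
  have hphi : Partrec (phi e) := eval_part.comp (Computable.const _) Computable.id
  have hbit : Computable₂ fun (_ : ℕ) (w : ℕ) => decide (w = 1) :=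
    (Primrec.eq.comp Primrec.snd (Primrec.const 1)).decide.to_comp.to₂
  refine ⟨fun n => decide (v n = 1), (hphi.map hbit).of_eq_tot fun n => by simp [hv n],
    fun n => ?_⟩
  rw [hv n]
  have := hv1 n
  interval_cases h : v n <;> simp [h]

def IsInitialSegment (u : List ℕ) (x : ℕ → Bool) : Prop :=
  ∀ (m : ℕ) (hm : m < u.length), u[m] = cond (x m) 1 0

/-- Stage `s` of the program with parameters `a = (i, c, u)` and own code `r` on input `n`. -/
def guardedStep (a : ℕ × Code × List ℕ) (r : Code) (n s : ℕ) : Option ℕ :=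
  a.2.2[n]? <|> evaln s a.2.1 n <|> bif memWAt a.1 s (encode r) then some 0 else none

/-- Clipping by `min · 1` keeps the output binary even when `c` is not. -/
noncomputable def guardedCopy (a : ℕ × Code × List ℕ) (r : Code) (n : ℕ) : Part ℕ :=
  (Nat.rfindOpt (guardedStep a r n)).map (min · 1)

theorem primrec_guardedStep : Primrec₂ fun (q : ((ℕ × Code × List ℕ) × Code) × ℕ) s =>
    guardedStep q.1.1 q.1.2 q.2 s := by
  have ha : Primrec fun p : (((ℕ × Code × List ℕ) × Code) × ℕ) × ℕ => p.1.1.1 :=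
    Primrec.fst.comp (Primrec.fst.comp Primrec.fst)
  have hr : Primrec fun p : (((ℕ × Code × List ℕ) × Code) × ℕ) × ℕ => p.1.1.2 :=
    Primrec.snd.comp (Primrec.fst.comp Primrec.fst)
  have hn : Primrec fun p : (((ℕ × Code × List ℕ) × Code) × ℕ) × ℕ => p.1.2 :=
    Primrec.snd.comp Primrec.fst
  have hc : Primrec fun p : (((ℕ × Code × List ℕ) × Code) × ℕ) × ℕ => p.1.1.1.2.1 :=
    Primrec.fst.comp (Primrec.snd.comp ha)
  have hprefix := Primrec.list_getElem?.comp (Primrec.snd.comp (Primrec.snd.comp ha)) hn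
  have hcopy := primrec_evaln.comp ((Primrec.snd.pair hc).pair hn)
  have hmem := primrec_memWAt.comp
    ((Primrec.fst.comp ha).pair (Primrec.snd.pair (Primrec.encode.comp hr)))
  exact Primrec.option_orElse.comp hprefix (Primrec.option_orElse.comp hcopy
    (Primrec.cond hmem (Primrec.const (some 0)) (Primrec.const none)))

theorem partrec_guardedCopy :
    Partrec₂ fun (p : (ℕ × Code × List ℕ) × Code) n => guardedCopy p.1 p.2 n :=
  (Partrec.rfindOpt primrec_guardedStep.to_comp).map
    (Primrec.nat_min.comp Primrec.snd (Primrec.const 1)).to_comp.to₂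

section GuardedCopy

variable {i : ℕ} {c r : Code} {u : List ℕ} (hr : eval r = guardedCopy (i, c, u) r)
include hr

theorem computesSeq_of_not_mem_W {x : ℕ → Bool} (hW : encode r ∉ W i)
    (hc : computesSeq (encode c) x) (hu : IsInitialSegment u x) :
    computesSeq (encode r) x := by
  intro n
  have hstep : ∀ s, guardedStep (i, c, u) r n s = (u[n]? <|> evaln s c n) := by
    intro s
    have : memWAt i s (encode r) = false := by
      simp only [mem_W_iff_exists_memWAt, not_exists, Bool.not_eq_true] at hW
      exact hW s
    simp [guardedStep, this]
  have hval : ∀ s, ∀ v ∈ guardedStep (i, c, u) r n s, v = cond (x n) 1 0 := by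
    intro s v hv
    rw [hstep, Option.mem_def, Option.orElse_eq_some] at hv
    rcases hv with hv | ⟨-, hv⟩
    · obtain ⟨hm, rfl⟩ := List.getElem?_eq_some_iff.1 hv
      exact hu n hm
    · have := evaln_sound hv
      rwa [← phi_encode, hc n, Part.mem_some_iff] at this
  have hdom : ∃ s, (guardedStep (i, c, u) r n s).isSome := by
    obtain ⟨s, hs⟩ := evaln_complete.1
      (show cond (x n) 1 0 ∈ eval c n by simp [← phi_encode, hc n])
    exact ⟨s, by simp [hstep, Option.isSome_iff_exists.2 ⟨_, hs⟩]⟩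
  rw [phi_encode, hr, guardedCopy, Nat.rfindOpt_eq_some_of_forall hdom hval]
  cases x n <;> rfl

theorem exists_le_one_eval_eq_some_of_mem_W (hW : encode r ∈ W i) (n : ℕ) :
    ∃ v ≤ 1, eval r n = Part.some v := by
  obtain ⟨s, hs⟩ := mem_W_iff_exists_memWAt.1 hW
  have hdom : (Nat.rfindOpt (guardedStep (i, c, u) r n)).Dom := by
    refine Nat.rfindOpt_dom.2 ⟨s, Option.isSome_iff_exists.1 ?_⟩
    simp [guardedStep, hs]
  exact ⟨_, min_le_right _ 1, by rw [hr, guardedCopy, Part.eq_some_iff]; exact ⟨hdom, rfl⟩⟩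

theorem eval_of_lt_length {n : ℕ} (hn : n < u.length) : eval r n = Part.some (min u[n] 1) := by
  rw [hr, guardedCopy, Nat.rfindOpt_eq_some_of_forall (b := u[n]) ⟨0, by simp [guardedStep, hn]⟩
    (fun s v hv => by simpa [guardedStep, hn] using hv.symm)]
  rfl

theorem apply_eq_of_lt_length {x y : ℕ → Bool} (hy : computesSeq (encode r) y)
    (hu : IsInitialSegment u x) {m : ℕ} (hm : m < u.length) :
    y m = x m := by
  have h : Part.some (cond (y m) 1 0) = Part.some (min (cond (x m) 1 0) 1) := by
    rw [← hy m, phi_encode, eval_of_lt_length hr hm, hu m hm]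
  revert h
  cases x m <;> cases y m <;> simp

end GuardedCopy

section Markov

variable {i : ℕ} {A : Set (ℕ → Bool)} (hM : MarkovVia (W i) A) {c r : Code} {u : List ℕ}
  (hr : eval r = guardedCopy (i, c, u) r)
include hM hr

theorem encode_mem_W_of_mem {x : ℕ → Bool} (hx : Computable x) (hxA : x ∈ A)
    (hc : computesSeq (encode c) x) (hu : IsInitialSegment u x) :
    encode r ∈ W i := by
  by_contra hW
  exact hW ((hM _ x hx (computesSeq_of_not_mem_W hr hW hc hu)).1 hxA)

theorem exists_mem_of_encode_mem_W (hW : encode r ∈ W i) :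
    ∃ y, Computable y ∧ computesSeq (encode r) y ∧ y ∈ A := by
  obtain ⟨y, hy, hry⟩ := exists_computable_computesSeq_of_le_one (e := encode r)
    (by simpa using exists_le_one_eval_eq_some_of_mem_W hr hW)
  exact ⟨y, hy, hry, (hM _ y hy hry).2 hW⟩

end Markov

section Witness

variable (r : ℕ × Code × List ℕ → Code)

/-- `j` codes a triple `(c, u, s)`; it is a witness for `i` if `r (i, c, u)` is enumerated into
`W i` within `s` steps. -/
def witnessCode (i j : ℕ) : Code :=
  r (i, (ofNat (Code × List ℕ × ℕ) j).1, (ofNat (Code × List ℕ × ℕ) j).2.1)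

def isWitness (i j : ℕ) : Bool :=
  memWAt i (ofNat (Code × List ℕ × ℕ) j).2.2 (encode (witnessCode r i j))

def witnessSet : Set ℕ := {i | ∃ j, isWitness r i j}

noncomputable def witnessSeq (p : ℕ × ℕ) : Part ℕ :=
  (bif isWitness r p.1 p.2 then Part.some p.2
    else Nat.rfind fun k => Part.some (isWitness r p.1 k)).map
    fun k => encode (witnessCode r p.1 k)

variable {r}

theorem witnessSeq_eq_of_isWitness {i j : ℕ} (hj : isWitness r i j) :
    witnessSeq r (i, j) = Part.some (encode (witnessCode r i j)) := by
  simp [witnessSeq, hj]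

theorem exists_witnessSeq_eq {i : ℕ} (hi : i ∈ witnessSet r) (j : ℕ) :
    ∃ k, isWitness r i k ∧ witnessSeq r (i, j) = Part.some (encode (witnessCode r i k)) := by
  by_cases hj : isWitness r i j
  · exact ⟨j, hj, witnessSeq_eq_of_isWitness hj⟩
  · refine ⟨Nat.find hi, Nat.find_spec hi, ?_⟩
    have hfind : Nat.find hi ∈ Nat.rfind fun k => Part.some (isWitness r i k) :=
      Nat.mem_rfind.2 ⟨by simpa using Nat.find_spec hi,
        fun hk => by simpa using Nat.find_min hi hk⟩
    simp [witnessSeq, hj, Part.eq_some_iff.2 hfind]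

variable (hrp : Primrec r)
include hrp

theorem primrec_witnessCode : Primrec₂ (witnessCode r) := by
  have hj := (Primrec.ofNat (Code × List ℕ × ℕ)).comp (Primrec.snd (α := ℕ) (β := ℕ))
  exact hrp.comp
    (Primrec.fst.pair ((Primrec.fst.comp hj).pair (Primrec.fst.comp (Primrec.snd.comp hj))))

theorem primrec_isWitness : Primrec₂ (isWitness r) := by
  have hj := (Primrec.ofNat (Code × List ℕ × ℕ)).comp (Primrec.snd (α := ℕ) (β := ℕ))
  exact primrec_memWAt.comp (Primrec.fst.pair ((Primrec.snd.comp (Primrec.snd.comp hj)).pair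
    (Primrec.encode.comp (primrec_witnessCode hrp))))

theorem re_witnessSet : REPred (· ∈ witnessSet r) :=
  (Partrec.rfind (primrec_isWitness hrp).to_comp.partrec₂).dom_re.of_eq fun i => by
    simp [witnessSet, Nat.rfind_dom]

theorem partrec_witnessSeq : Partrec (witnessSeq r) := by
  have hw : Computable₂ fun (p : ℕ × ℕ) k => isWitness r p.1 k :=
    (primrec_isWitness hrp).to_comp.comp (Computable.fst.comp Computable.fst) Computable.snd
  have hc : Computable₂ fun (p : ℕ × ℕ) k => encode (witnessCode r p.1 k) :=
    Computable.encode.comp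
      ((primrec_witnessCode hrp).to_comp.comp (Computable.fst.comp Computable.fst) Computable.snd)
  exact (Partrec.cond (primrec_isWitness hrp).to_comp Computable.snd.partrec
    (Partrec.rfind hw.partrec₂)).map hc

end Witness

section WitnessSemantics

variable {r : ℕ × Code × List ℕ → Code} (hr : ∀ a, eval (r a) = guardedCopy a (r a))
  {i : ℕ} {A : Set (ℕ → Bool)} (hM : MarkovVia (W i) A)
include hr hM

theorem exists_mem_of_isWitness {j : ℕ} (hj : isWitness r i j) :
    ∃ y, Computable y ∧ computesSeq (encode (witnessCode r i j)) y ∧ y ∈ A :=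
  exists_mem_of_encode_mem_W hM (hr _) (mem_W_iff_exists_memWAt.2 ⟨_, hj⟩)

theorem exists_isWitness_of_mem {x : ℕ → Bool} (hx : Computable x) (hxA : x ∈ A)
    {u : List ℕ} (hu : IsInitialSegment u x) :
    ∃ c j, isWitness r i j ∧ witnessCode r i j = r (i, c, u) := by
  obtain ⟨c, hc⟩ := exists_computesSeq hx
  obtain ⟨s, hs⟩ :=
    mem_W_iff_exists_memWAt.1 (encode_mem_W_of_mem hM (hr (i, c, u)) hx hxA hc hu)
  exact ⟨c, encode (c, u, s), by simpa [isWitness, witnessCode] using hs, by simp [witnessCode]⟩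

theorem nonempty_iff_mem_witnessSet (hA : A ⊆ {x | Computable x}) :
    A.Nonempty ↔ i ∈ witnessSet r := by
  constructor
  · rintro ⟨x, hxA⟩
    obtain ⟨-, j, hj, -⟩ := exists_isWitness_of_mem hr hM (hA hxA) hxA (u := [])
      (by simp [IsInitialSegment])
    exact ⟨j, hj⟩
  · rintro ⟨j, hj⟩
    obtain ⟨y, -, -, hyA⟩ := exists_mem_of_isWitness hr hM hj
    exact ⟨y, hyA⟩

end WitnessSemantics

/-- Nonemptiness of a Markov-semidecidable set is semidecidable uniformly in a c.e. index
for it, and from such an index one can compute (indices of) a sequence of elements of `A`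
that is dense in `A` (for the Cantor topology). -/
theorem stmt5 :
    ∃ (N : Set ℕ) (d : ℕ × ℕ →. ℕ), REPred (· ∈ N) ∧ Partrec d ∧
      ∀ (i : ℕ) (A : Set (ℕ → Bool)), A ⊆ {x | Computable x} → MarkovVia (W i) A →
        (A.Nonempty ↔ i ∈ N) ∧
        (A.Nonempty →
          (∀ j, ∃ e x, d (i, j) = Part.some e ∧ Computable x ∧ computesSeq e x ∧ x ∈ A) ∧
          (∀ x ∈ A, ∀ n, ∃ j e y, d (i, j) = Part.some e ∧ computesSeq e y ∧
            ∀ m < n, y m = x m)) := by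
  obtain ⟨r, hrp, hr⟩ := exists_primrec_fixed_point partrec_guardedCopy
  refine ⟨witnessSet r, witnessSeq r, re_witnessSet hrp, partrec_witnessSeq hrp,
    fun i A hA hM => ?_⟩
  have hN := nonempty_iff_mem_witnessSet hr hM hA
  refine ⟨hN, fun hne => ⟨fun j => ?_, fun x hxA n => ?_⟩⟩
  · obtain ⟨k, hk, hseq⟩ := exists_witnessSeq_eq (hN.1 hne) j
    obtain ⟨y, hy, hky, hyA⟩ := exists_mem_of_isWitness hr hM hk
    exact ⟨_, y, hseq, hy, hky, hyA⟩
  · let u := (List.range n).map fun m => cond (x m) 1 0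
    have hu : IsInitialSegment u x := by simp [IsInitialSegment, u]
    obtain ⟨c, j, hj, hjc⟩ := exists_isWitness_of_mem hr hM (hA hxA) hxA hu
    obtain ⟨y, -, hy, -⟩ := exists_mem_of_isWitness hr hM hj
    refine ⟨j, _, y, witnessSeq_eq_of_isWitness hj, hy, fun m hm => ?_⟩
    rw [hjc] at hy
    exact apply_eq_of_lt_length (hr _) hy hu (by simpa [u] using hm)
end

section
/- Every Markov-semidecidable set with empty interior in the computable Cantor space is nowhere dense there. Precisely: if A is a Markov-semidecidable set of computable binary sequences, P ⊆ {0,1}^ℕ is an effective Π⁰₁ set with P ∩ {computables} ⊆ A, and A has empty interior in the computable sequences, then P ∩ {computables} is nowhere dense in A. -/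
/-- An effective `Π⁰₁` subset of Cantor space: the complement of a c.e. union of cylinders. -/
def EffClosedCantor (P : Set (ℕ → Bool)) : Prop :=
  ∃ R : List Bool → Prop, REPred R ∧ P = {x | ∀ u, R u → x ∉ cyl u}

/-!
If some point of `A ∩ cyl u` lies outside `P`, a cylinder around it inside the open complement
`U` of `P` does the job. Otherwise `A ∩ cyl u ⊆ P`; pick `x ∈ A ∩ cyl u`. As `A` has empty
interior and `P ∩ {computables} ⊆ A`, every cylinder around `x` meets `U`. Now the
Kreisel–Lacombe–Shoenfield argument: by the recursion theorem there is a program `e` that outputs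
`x` until it sees itself enumerated into `I`, and then outputs a string in `U` extending what it has
already written. If `e ∉ I`, then `e` computes `x ∈ A`, contradicting Markov invariance; so
`e ∈ I`, and `e` computes a point of `A ∩ cyl u ∩ U`, contradicting `A ∩ cyl u ⊆ P`.
-/
open Nat.Partrec (Code)
open Nat.Partrec.Code Encodable

def seqPrefix (x : ℕ → Bool) (n : ℕ) : List Bool := (List.range n).map x

@[simp] lemma length_seqPrefix (x : ℕ → Bool) (n : ℕ) : (seqPrefix x n).length = n := by
  simp [seqPrefix]

lemma mem_cyl_iff {u : List Bool} {y : ℕ → Bool} :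
    y ∈ cyl u ↔ ∀ i, (hi : i < u.length) → y i = u[i] :=
  ⟨fun h i hi => h ⟨i, hi⟩, fun h i => h i.1 i.2⟩

lemma mem_cyl_seqPrefix_iff {x y : ℕ → Bool} {n : ℕ} :
    y ∈ cyl (seqPrefix x n) ↔ ∀ i < n, y i = x i := by
  simp [mem_cyl_iff, seqPrefix]

lemma mem_cyl_seqPrefix_self (x : ℕ → Bool) (n : ℕ) : x ∈ cyl (seqPrefix x n) :=
  mem_cyl_seqPrefix_iff.2 fun _ _ => rfl

lemma cyl_anti {u v : List Bool} (h : u <+: v) : cyl v ⊆ cyl u := fun y hy =>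
  mem_cyl_iff.2 fun i hi => by rw [mem_cyl_iff.1 hy i (hi.trans_le h.length_le), h.getElem hi]

lemma prefix_seqPrefix_of_mem_cyl {u : List Bool} {x : ℕ → Bool} (hx : x ∈ cyl u) {n : ℕ}
    (hn : u.length ≤ n) : u <+: seqPrefix x n := by
  rw [List.prefix_iff_eq_take]
  refine List.ext_getElem (by simp [hn]) fun i hi _ => ?_
  simp [seqPrefix, mem_cyl_iff.1 hx i hi]

lemma seqPrefix_prefix_seqPrefix (x : ℕ → Bool) {m n : ℕ} (h : m ≤ n) :
    seqPrefix x m <+: seqPrefix x n :=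
  prefix_seqPrefix_of_mem_cyl (mem_cyl_seqPrefix_self x m) (by simpa using h)

lemma exists_prefix_prefix_of_mem_cyl {u w : List Bool} {x : ℕ → Bool} (hu : x ∈ cyl u)
    (hw : x ∈ cyl w) : ∃ v, u <+: v ∧ w <+: v ∧ x ∈ cyl v :=
  ⟨seqPrefix x (max u.length w.length), prefix_seqPrefix_of_mem_cyl hu (le_max_left _ _),
    prefix_seqPrefix_of_mem_cyl hw (le_max_right _ _), mem_cyl_seqPrefix_self x _⟩

lemma getD_mem_cyl {u t : List Bool} (h : u <+: t) : (fun n => t.getD n false) ∈ cyl u :=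
  mem_cyl_iff.2 fun i hi => by
    simp [List.getElem?_eq_getElem (hi.trans_le h.length_le), h.getElem hi]

lemma Computable.seqPrefix {x : ℕ → Bool} (hx : Computable x) : Computable (seqPrefix x) := by
  refine (Computable.nat_rec Computable.id (Computable.const []) (Computable.list_concat.comp
    (Computable.snd.comp Computable.snd) (hx.comp (Computable.fst.comp Computable.snd))).to₂).of_eq
    fun n => ?_
  induction n with
  | zero => rfl
  | succ n ih => simp_all [_root_.seqPrefix, List.range_succ]

lemma Primrec.list_isPrefix {α : Type*} [Primcodable α] [DecidableEq α] :
    PrimrecRel (@List.IsPrefix α) :=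
  (Primrec.eq.comp₂ (Primrec.list_take.comp₂ (Primrec.list_length.comp₂ Primrec₂.left)
    Primrec₂.right) Primrec₂.left).of_eq fun _ _ => eq_comm.trans List.prefix_iff_eq_take.symm

def haltsIn (c : Code) (s n : ℕ) : Bool := (evaln s c n).isSome

lemma haltsIn_mono {c : Code} {s s' n : ℕ} (hs : s ≤ s') (h : haltsIn c s n) :
    haltsIn c s' n := by
  obtain ⟨a, ha⟩ := Option.isSome_iff_exists.1 h
  exact Option.isSome_iff_exists.2 ⟨a, evaln_mono hs ha⟩

lemma computable₂_haltsIn (c : Code) : Computable₂ (haltsIn c) :=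
  (Primrec.option_isSome.comp
    (primrec_evaln.comp ((Primrec.fst.pair (Primrec.const c)).pair Primrec.snd))).to_comp

lemma dom_eval_iff_exists_haltsIn (c : Code) (n : ℕ) :
    (eval c n).Dom ↔ ∃ s, haltsIn c s n := by
  simp only [Part.dom_iff_mem, evaln_complete, haltsIn, Option.isSome_iff_exists, Option.mem_def]
  exact exists_comm

lemma REPred.exists_code {α : Type*} [Primcodable α] {p : α → Prop} (hp : REPred p) :
    ∃ c : Code, ∀ a, p a ↔ ∃ s, haltsIn c s (encode a) := by
  obtain ⟨c, hc⟩ := Nat.Partrec.Code.exists_code.1 hp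
  refine ⟨c, fun a => ?_⟩
  rw [← dom_eval_iff_exists_haltsIn, hc]
  simp only [encodek, Part.coe_some, Part.bind_some, Part.map_Dom]
  exact ⟨fun h => ⟨h, trivial⟩, Exists.fst⟩

section FollowThenJump

variable (x : ℕ → Bool) (m : ℕ) (cI cR : Code)

/-- `k` codes a stage `s` by which `e` is seen in `I`, a candidate `t` extending the first
`max s m` bits of `x`, a string `w` of `R` below `t`, and a stage `j` by which `w` is seen in `R`. -/
def jumpCandidate (e k : ℕ) : Option (List Bool) :=
  (decode k : Option (ℕ × List Bool × List Bool × ℕ)).bind fun ⟨s, t, w, j⟩ =>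
    bif haltsIn cI s e && decide (seqPrefix x (max s m) <+: t) && decide (w <+: t) &&
      haltsIn cR j (encode w) then some t else none

noncomputable def followThenJump (c : Code) (n : ℕ) : Part ℕ :=
  bif haltsIn cI n (encode c) then
    (Nat.rfindOpt (jumpCandidate x m cI cR (encode c))).map fun t => cond (t.getD n false) 1 0
  else Part.some (cond (x n) 1 0)

variable {x m cI cR}

lemma mem_jumpCandidate_encode {e s j : ℕ} {t w : List Bool} (hs : haltsIn cI s e)
    (ht : seqPrefix x (max s m) <+: t) (hwt : w <+: t) (hj : haltsIn cR j (encode w)) :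
    t ∈ jumpCandidate x m cI cR e (encode (s, t, w, j)) := by
  simp [jumpCandidate, hs, ht, hwt, hj]

lemma exists_of_mem_jumpCandidate {e k : ℕ} {t : List Bool}
    (h : t ∈ jumpCandidate x m cI cR e k) :
    ∃ s w j, haltsIn cI s e ∧ seqPrefix x (max s m) <+: t ∧ w <+: t ∧ haltsIn cR j (encode w) := by
  simp only [jumpCandidate, Option.mem_def, Option.bind_eq_some_iff] at h
  obtain ⟨⟨s, t', w, j⟩, -, h⟩ := h
  simp only [Bool.cond_eq_ite, Bool.and_eq_true, decide_eq_true_eq] at h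
  split_ifs at h with hc
  obtain ⟨⟨⟨hs, ht⟩, hw⟩, hj⟩ := hc
  cases h
  exact ⟨s, w, j, hs, ht, hw, hj⟩

lemma computable₂_jumpCandidate (hx : Computable x) :
    Computable₂ (jumpCandidate x m cI cR) := by
  have hs : Computable fun r : (ℕ × ℕ) × ℕ × List Bool × List Bool × ℕ => r.2.1 :=
    Computable.fst.comp Computable.snd
  have ht : Computable fun r : (ℕ × ℕ) × ℕ × List Bool × List Bool × ℕ => r.2.2.1 :=
    Computable.fst.comp (Computable.snd.comp Computable.snd)
  have hw : Computable fun r : (ℕ × ℕ) × ℕ × List Bool × List Bool × ℕ => r.2.2.2.1 :=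
    Computable.fst.comp (Computable.snd.comp (Computable.snd.comp Computable.snd))
  have hj : Computable fun r : (ℕ × ℕ) × ℕ × List Bool × List Bool × ℕ => r.2.2.2.2 :=
    Computable.snd.comp (Computable.snd.comp (Computable.snd.comp Computable.snd))
  have hand := Primrec.and.to_comp (α := Bool)
  have hpre := (Primrec.list_isPrefix (α := Bool)).decide.to_comp
  have htest := hand.comp (hand.comp (hand.comp
    ((computable₂_haltsIn cI).comp hs (Computable.fst.comp Computable.fst))
    (hpre.comp (hx.seqPrefix.comp (Primrec.nat_max.to_comp.comp hs (Computable.const m))) ht))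
    (hpre.comp hw ht))
    ((computable₂_haltsIn cR).comp hj (Computable.encode.comp hw))
  exact (Computable.option_bind (Computable.decode.comp Computable.snd)
    (Computable.cond htest (Computable.option_some.comp ht) (Computable.const none)).to₂).of_eq
    fun _ => rfl

lemma partrec₂_followThenJump (hx : Computable x) :
    Partrec₂ (followThenJump x m cI cR) := by
  have hbit : Computable fun b : Bool => (cond b 1 0 : ℕ) := (Primrec.dom_bool _).to_comp
  have hjump : Partrec fun p : Code × ℕ =>
      (Nat.rfindOpt (jumpCandidate x m cI cR (encode p.1))).map
        fun t => cond (t.getD p.2 false) 1 0 :=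
    (Partrec.rfindOpt ((computable₂_jumpCandidate hx).comp
      (Computable.encode.comp (Computable.fst.comp Computable.fst)) Computable.snd).to₂).map
      (hbit.comp ((Primrec.list_getD false).to_comp.comp Computable.snd
        (Computable.snd.comp Computable.fst))).to₂
  exact Partrec.cond ((computable₂_haltsIn cI).comp Computable.snd
    (Computable.encode.comp Computable.fst)) hjump (hbit.comp (hx.comp Computable.snd))

end FollowThenJump

section FixedPoint

variable {x : ℕ → Bool} {m : ℕ} {cI cR c : Code} (hc : eval c = followThenJump x m cI cR c)
include hc

lemma phi_encode_eq_followThenJump (n : ℕ) :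
    phi (encode c) n = followThenJump x m cI cR c n := by
  rw [phi, Denumerable.ofNat_encode, hc]

lemma computesSeq_of_forall_not_haltsIn (h : ∀ s, haltsIn cI s (encode c) = false) :
    computesSeq (encode c) x := fun n => by
  rw [phi_encode_eq_followThenJump hc, followThenJump, h n, cond_false]

lemma computesSeq_of_mem_rfindOpt {t : List Bool}
    (ht : t ∈ Nat.rfindOpt (jumpCandidate x m cI cR (encode c))) :
    computesSeq (encode c) (fun n => t.getD n false) := fun n => by
  obtain ⟨k, hk⟩ := Nat.rfindOpt_spec ht
  obtain ⟨s, -, -, hs, hxt, -⟩ := exists_of_mem_jumpCandidate hk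
  rw [phi_encode_eq_followThenJump hc, followThenJump]
  cases hn : haltsIn cI n (encode c)
  · have hns : n < s := lt_of_not_ge fun hsn => by simp [haltsIn_mono hsn hs] at hn
    rw [cond_false]
    exact congrArg (fun b => Part.some (cond b 1 0))
      (mem_cyl_seqPrefix_iff.1 (getD_mem_cyl hxt) n (lt_max_of_lt_left hns)).symm
  · rw [cond_true, Part.eq_some_iff.2 ht, Part.map_some]

end FixedPoint

theorem MarkovVia.exists_mem_cyl_seqPrefix_of_mem_closure {I : Set ℕ}
    {A : Set (ℕ → Bool)} (hI : REPred (· ∈ I)) (hA : MarkovVia I A) {R : List Bool → Prop}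
    (hR : REPred R) {x : ℕ → Bool} (hx : Computable x) (hxA : x ∈ A)
    (hdense : ∀ n, ∃ w, R w ∧ (cyl (seqPrefix x n) ∩ cyl w).Nonempty) (m : ℕ) :
    ∃ y ∈ A, y ∈ cyl (seqPrefix x m) ∧ ∃ w, R w ∧ y ∈ cyl w := by
  obtain ⟨cI, hcI⟩ := hI.exists_code
  obtain ⟨cR, hcR⟩ := hR.exists_code
  obtain ⟨c, hc⟩ := fixed_point₂ (partrec₂_followThenJump (m := m) (cI := cI) (cR := cR) hx)
  have hcI_mem : encode c ∈ I := by
    by_contra hc_not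
    refine hc_not ((hA _ x hx (computesSeq_of_forall_not_haltsIn hc fun s => ?_)).1 hxA)
    simpa using fun h => hc_not ((hcI _).2 ⟨s, h⟩)
  obtain ⟨s, hs⟩ := (hcI _).1 hcI_mem
  obtain ⟨w, hRw, z, hzx, hzw⟩ := hdense (max s m)
  obtain ⟨t, hxt, hwt, -⟩ := exists_prefix_prefix_of_mem_cyl hzx hzw
  obtain ⟨j, hj⟩ := (hcR w).1 hRw
  obtain ⟨y, hy⟩ : ∃ y, y ∈ Nat.rfindOpt (jumpCandidate x m cI cR (encode c)) :=
    Part.dom_iff_mem.1 <|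
      Nat.rfindOpt_dom.2 ⟨_, t, mem_jumpCandidate_encode (by simpa using hs) hxt hwt hj⟩
  obtain ⟨k, hk⟩ := Nat.rfindOpt_spec hy
  obtain ⟨s', w', j', -, hxy, hwy, hj'⟩ := exists_of_mem_jumpCandidate hk
  have hy_comp : Computable fun n => y.getD n false :=
    ((Primrec.list_getD false).comp (Primrec.const y) Primrec.id).to_comp
  exact ⟨_, (hA _ _ hy_comp (computesSeq_of_mem_rfindOpt hc hy)).2 hcI_mem,
    cyl_anti (seqPrefix_prefix_seqPrefix x (le_max_right s' m)) (getD_mem_cyl hxy),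
    w', (hcR w').2 ⟨j', hj'⟩, getD_mem_cyl hwy⟩

/-- If `A` is Markov-semidecidable with empty interior in the computable Cantor space, and
`P` is an effective `Π⁰₁` set with `P ∩ {computables} ⊆ A`, then `P ∩ {computables}` is
nowhere dense in `A`. -/
theorem stmt8 (A : Set (ℕ → Bool)) (hsub : A ⊆ {x | Computable x})
    (hM : ∃ I : Set ℕ, REPred (· ∈ I) ∧ MarkovVia I A)
    (P : Set (ℕ → Bool)) (hP : EffClosedCantor P)
    (hPA : P ∩ {x | Computable x} ⊆ A)
    (hint : ∀ u : List Bool, ¬ (cyl u ∩ {x | Computable x} ⊆ A)) :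
    ∀ u : List Bool, (A ∩ cyl u).Nonempty →
      ∃ v : List Bool, u <+: v ∧ (A ∩ cyl v).Nonempty ∧ A ∩ cyl v ∩ P = ∅ := by
  obtain ⟨I, hI, hA⟩ := hM
  obtain ⟨R, hR, rfl⟩ := hP
  rintro u ⟨x, hxA, hxu⟩
  by_cases hescape : ∃ x' ∈ A ∩ cyl u, ∃ w, R w ∧ x' ∈ cyl w
  · obtain ⟨x', ⟨hx'A, hx'u⟩, w, hRw, hx'w⟩ := hescape
    obtain ⟨v, huv, hwv, hx'v⟩ := exists_prefix_prefix_of_mem_cyl hx'u hx'w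
    exact ⟨v, huv, ⟨x', hx'A, hx'v⟩,
      Set.eq_empty_of_forall_notMem fun y ⟨⟨_, hyv⟩, hyP⟩ => hyP w hRw (cyl_anti hwv hyv)⟩
  simp only [not_exists, not_and] at hescape
  have hdense : ∀ n, ∃ w, R w ∧ (cyl (seqPrefix x n) ∩ cyl w).Nonempty := by
    intro n
    obtain ⟨z, ⟨hzx, hz⟩, hzA⟩ := Set.not_subset.1 (hint (seqPrefix x n))
    obtain ⟨w, hRw, hzw⟩ : ∃ w, R w ∧ z ∈ cyl w := by
      by_contra hzP
      simp only [not_exists, not_and] at hzP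
      exact hzA (hPA ⟨hzP, hz⟩)
    exact ⟨w, hRw, z, hzx, hzw⟩
  obtain ⟨y, hyA, hyx, w, hRw, hyw⟩ :=
    hA.exists_mem_cyl_seqPrefix_of_mem_closure hI hR (hsub hxA) hxA hdense u.length
  exact (hescape y ⟨hyA, cyl_anti (prefix_seqPrefix_of_mem_cyl hxu le_rfl) hyx⟩ w hRw hyw).elim
end

section
/- The class {ℕ} ⊆ P(ℕ) (the singleton consisting of the full set ℕ) is K-semidecidable relative to ∅″, but is not Type-2-semidecidable relative to any oracle. -/
/-- The halting set `∅′`. -/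
def halts : Set ℕ := {e | (phi e e).Dom}

/-- Characteristic function of a set of naturals. -/
noncomputable def chi (S : Set ℕ) : ℕ → Bool :=
  fun n => @decide (n ∈ S) (Classical.propDecidable _)

/-- The admissible numbering of Sierpiński space `𝕊 = {⊥,⊤}` (with `⊥ = false`, `⊤ = true`):
`ν_𝕊(e) = ⊤` iff `φ_e(e)↓`. -/
noncomputable def nuS (e : ℕ) : Bool := @decide ((phi e e).Dom) (Classical.propDecidable _)

/-- `f` is a Type-2 name of the point `s ∈ 𝕊`: `s = ⊤` iff `f` eventually shows a nonzero. -/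
def SierpName (f : ℕ → ℕ) (s : Bool) : Prop := (s = true ↔ ∃ n, f n ≠ 0)

/-- `f` is a Type-2 name (enumeration) of the set `S ⊆ ℕ` (0 is padding, `n+1` codes `n`). -/
def EnumName (f : ℕ → ℕ) (S : Set ℕ) : Prop := S = {n | ∃ m, f m = n + 1}

/-- A canonical `Π⁰₂`-complete set, Turing-equivalent to `∅″`. -/
def zeroJJ : Set ℕ := {e | W e = Set.univ}

/-!
Let `e₀ < 2 ^ k` be an index of `E` of least size. With `∅″` as oracle, wait until every index
`e < 2 ^ k` is discharged: either `W e = ℕ`, or some `n` already enumerated into `E` lies outside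
`W e`. Both are `∅″`-questions, the second because `n ∉ W e` is `Π⁰₁`. If `E = ℕ`, every index is
eventually discharged; conversely `e₀` can only be discharged by `W e₀ = ℕ`, so `E = ℕ`.

Without the bound `k` no oracle helps: a machine that halts on the enumeration `0, 1, 2, …` of `ℕ`
does so after reading a finite prefix, which also begins an enumeration of a finite set.
-/

open Nat.Partrec (Code)
open Nat.Partrec.Code Filter

theorem W_encode (c : Code) : W (Encodable.encode c) = c.eval.Dom := by
  simp [W, phi]

theorem Partrec₂.exists_primrec_W_eq_dom {α : Type*} [Primcodable α] {f : ℕ → ℕ →. α}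
    (hf : Partrec₂ f) : ∃ g : ℕ → ℕ, Primrec g ∧ ∀ a, W (g a) = (f a).Dom := by
  have hnat : Nat.Partrec fun p => (f p.unpair.1 p.unpair.2).map Encodable.encode :=
    Partrec.nat_iff.1 <| (hf.comp (Computable.fst.comp Computable.unpair)
      (Computable.snd.comp Computable.unpair)).map (Computable.encode.comp Computable.snd).to₂
  obtain ⟨c, hc⟩ := exists_code.1 hnat
  refine ⟨fun a => Encodable.encode (c.curry a),
    Primrec.encode.comp (primrec₂_curry.comp (Primrec.const c) Primrec.id), fun a => ?_⟩
  ext x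
  simp [W_encode, PFun.Dom, eval_curry, hc]

theorem Partrec.exists_W_eq_dom {α : Type*} [Primcodable α] {f : ℕ →. α} (hf : Partrec f) :
    ∃ e, W e = f.Dom :=
  let ⟨g, _, hg⟩ := Partrec₂.exists_primrec_W_eq_dom (f := fun _ => f) (hf.comp Computable.snd)
  ⟨g 0, hg 0⟩

theorem REPred.exists_W_eq {p : ℕ → Prop} (hp : REPred p) : ∃ e, W e = {n | p n} := by
  obtain ⟨e, he⟩ := Partrec.exists_W_eq_dom hp
  exact ⟨e, he.trans (by ext; simp [PFun.Dom, Part.assert])⟩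

theorem exists_W_eq_univ : ∃ e, W e = Set.univ :=
  let ⟨e, he⟩ := Partrec.exists_W_eq_dom (Computable.id (α := ℕ)).partrec
  ⟨e, he.trans (Set.eq_univ_of_forall fun _ => trivial)⟩

theorem exists_W_eq_Iio (m : ℕ) : ∃ e, W e = Set.Iio m :=
  REPred.exists_W_eq
    (PrimrecPred.computablePred (Primrec.nat_lt.comp Primrec.id (Primrec.const m))).to_re

theorem mem_W_iff_exists_evaln {e n : ℕ} :
    n ∈ W e ↔ ∃ s, (evaln s (Denumerable.ofNat Code e) n).isSome := by
  simpa [W, phi, PFun.Dom, Part.dom_iff_mem, evaln_complete, Option.isSome_iff_exists]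
    using exists_comm

theorem exists_primrec₂_W_eq_univ_iff_not_mem :
    ∃ g : ℕ → ℕ → ℕ, Primrec₂ g ∧ ∀ e n, W (g e n) = Set.univ ↔ n ∉ W e := by
  -- `W (g e n)` is the set of stages by which `φ_e(n)` has not yet halted.
  let halted (a s : ℕ) : Bool := (evaln s (Denumerable.ofNat Code a.unpair.1) a.unpair.2).isSome
  have hhalted : Primrec₂ halted :=
    Primrec.option_isSome.comp <| primrec_evaln.comp <|
      (Primrec.snd.pair ((Primrec.ofNat Code).comp (Primrec.fst.comp (Primrec.unpair.comp
        Primrec.fst)))).pair (Primrec.snd.comp (Primrec.unpair.comp Primrec.fst))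
  have hF : Partrec₂ fun a s => ((bif halted a s then none else some () : Option Unit) : Part Unit) :=
    Computable.ofOption (Primrec.cond hhalted (Primrec.const none) (Primrec.const _)).to_comp
  obtain ⟨g, hg, hW⟩ := hF.exists_primrec_W_eq_dom
  refine ⟨fun e n => g (Nat.pair e n), hg.comp Primrec₂.natPair, fun e n => ?_⟩
  rw [hW, mem_W_iff_exists_evaln, Set.eq_univ_iff_forall, not_exists]
  refine forall_congr' fun s => ?_
  simp only [halted, PFun.Dom, Set.mem_ofPred_eq, Part.ofOption_dom, Nat.unpair_pair]
  cases evaln s (Denumerable.ofNat Code e) n <;> simp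

theorem exists_W_eq_of_KW_le {E : Set ℕ} (hE : ∃ e, W e = E) {k : ℕ} (hk : KW E ≤ k) :
    ∃ e < 2 ^ k, W e = E := by
  obtain ⟨e₀, he₀⟩ := hE
  obtain ⟨e, he, hsize⟩ := Nat.sInf_mem (s := Nat.size '' {e | W e = E}) ⟨_, e₀, he₀, rfl⟩
  exact ⟨e, Nat.size_le.1 (hsize.trans_le hk), he⟩

theorem List.range_prefix_range {m m' : ℕ} (h : m ≤ m') : List.range m <+: List.range m' := by
  obtain ⟨d, rfl⟩ := Nat.exists_eq_add_of_le h
  rw [List.range_add]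
  exact List.prefix_append _ _

@[simp]
theorem length_prefB (p : ℕ → Bool) (m : ℕ) : (prefB p m).length = m := by
  simp [prefB]

theorem getElem?_prefB_eq_some_true {p : ℕ → Bool} {m i : ℕ} :
    (prefB p m)[i]? = some true ↔ i < m ∧ p i = true := by
  simp [prefB, List.getElem?_eq_some_iff]

theorem mem_pref {f : ℕ → ℕ} {m x : ℕ} : x ∈ pref f m ↔ ∃ j < m, f j = x := by
  simp [pref]

theorem chi_eq_true {S : Set ℕ} {n : ℕ} : chi S n = true ↔ n ∈ S := by
  simp [chi]

theorem enumName_succ_univ : EnumName (· + 1) Set.univ :=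
  (Set.eq_univ_of_forall fun n => ⟨n, rfl⟩ : {n | ∃ m, m + 1 = n + 1} = Set.univ).symm

theorem enumName_Iio (m : ℕ) : EnumName (fun j => if j < m then j + 1 else 0) (Set.Iio m) := by
  ext n
  simp only [Set.mem_Iio, Set.mem_ofPred_eq]
  refine ⟨fun hn => ⟨n, if_pos hn⟩, fun ⟨j, hj⟩ => ?_⟩
  split_ifs at hj
  omega

section Semidecider

variable (g : ℕ → ℕ → ℕ)

/-- With `g` reducing `n ∉ W e` to `W (g e n) = ℕ`, and `l₁`, `l₂` prefixes of `χ_{∅″}` and of an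
enumeration of `E`: the prefixes certify `W e = ℕ`, or `W e ≠ E` through a witness `n ∈ E \ W e`. -/
def Discharged (e : ℕ) (l₁ : List Bool) (l₂ : List ℕ) : Prop :=
  l₁[e]? = some true ∨ ∃ n < l₁.length, l₁[g e n]? = some true ∧ n + 1 ∈ l₂

instance (e : ℕ) : DecidableRel (Discharged g e) := fun _ _ => by
  unfold Discharged; infer_instance

theorem Discharged.mono {g} {e : ℕ} {l₁ l₁' : List Bool} {l₂ l₂' : List ℕ}
    (h : Discharged g e l₁ l₂) (h₁ : l₁ <+: l₁') (h₂ : l₂ <+: l₂') : Discharged g e l₁' l₂' := by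
  have hget {i : ℕ} (hi : l₁[i]? = some true) : l₁'[i]? = some true := by
    obtain ⟨t, rfl⟩ := h₁
    rw [List.getElem?_append_left (List.getElem?_eq_some_iff.1 hi).1, hi]
  rcases h with h | ⟨n, hn, hgn, hmem⟩
  · exact Or.inl (hget h)
  · exact Or.inr ⟨n, hn.trans_le h₁.length_le, hget hgn, h₂.subset hmem⟩

theorem primrecRel_discharged (hg : Primrec₂ g) :
    PrimrecRel fun e (p : List Bool × List ℕ) => Discharged g e p.1 p.2 := by
  have hval : PrimrecRel fun (i : ℕ) (l : List Bool) => l[i]? = some true :=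
    Primrec.eq.comp (Primrec.list_getElem?.comp Primrec.snd Primrec.fst) (Primrec.const _)
  have hwit : PrimrecRel fun (n : ℕ) (q : ℕ × List Bool × List ℕ) =>
      q.2.1[g q.1 n]? = some true ∧ n + 1 ∈ q.2.2 :=
    (hval.comp (hg.comp (Primrec.fst.comp Primrec.snd) Primrec.fst)
      (Primrec.fst.comp (Primrec.snd.comp Primrec.snd))).and
      ((PrimrecRel.exists_mem_list Primrec.eq).comp
        (Primrec.snd.comp (Primrec.snd.comp Primrec.snd)) (Primrec.succ.comp Primrec.fst)
        |>.of_eq fun _ => by simp)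
  have hex : PrimrecPred fun q : ℕ × List Bool × List ℕ =>
      ∃ n < q.2.1.length, q.2.1[g q.1 n]? = some true ∧ n + 1 ∈ q.2.2 :=
    (PrimrecRel.exists_mem_list hwit).comp
      (Primrec.list_range.comp (Primrec.list_length.comp (Primrec.fst.comp Primrec.snd)))
      Primrec.id |>.of_eq fun _ => by simp
  exact (hval.comp Primrec.fst (Primrec.fst.comp Primrec.snd)).or hex

def semidecider (k : ℕ) (l₁ : List Bool) (l₂ : List ℕ) : Option Unit :=
  if ∀ e < 2 ^ k, Discharged g e l₁ l₂ then some () else none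

theorem semidecider_eq_some_iff {k : ℕ} {l₁ : List Bool} {l₂ : List ℕ} {v : Unit} :
    semidecider g k l₁ l₂ = some v ↔ ∀ e < 2 ^ k, Discharged g e l₁ l₂ := by
  unfold semidecider; split_ifs <;> simp_all

theorem computable_semidecider (hg : Primrec₂ g) :
    Computable fun p : ℕ × List Bool × List ℕ => semidecider g p.1 p.2.1 p.2.2 := by
  have hpow : Primrec fun k : ℕ => 2 ^ k :=
    (Primrec₂.unpaired'.1 Nat.Primrec.pow).comp (Primrec.const 2) Primrec.id
  have hall : PrimrecPred fun p : ℕ × List Bool × List ℕ =>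
      ∀ e < 2 ^ p.1, Discharged g e p.2.1 p.2.2 :=
    (PrimrecRel.forall_mem_list (primrecRel_discharged g hg)).comp
      (Primrec.list_range.comp (hpow.comp Primrec.fst)) Primrec.snd |>.of_eq fun _ => by simp
  exact (Primrec.ite hall (Primrec.const _) (Primrec.const _)).to_comp

theorem semidecider_append {k : ℕ} {l₁ l₁' : List Bool} {l₂ l₂' : List ℕ} {v : Unit}
    (h : semidecider g k l₁ l₂ = some v) : semidecider g k (l₁ ++ l₁') (l₂ ++ l₂') = some v := by
  rw [semidecider_eq_some_iff] at h ⊢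
  exact fun e he => (h e he).mono (List.prefix_append _ _) (List.prefix_append _ _)

end Semidecider

section Oracle

variable {g : ℕ → ℕ → ℕ} {E : Set ℕ} {f : ℕ → ℕ}

theorem exists_discharged_iff (hg : ∀ e n, W (g e n) = Set.univ ↔ n ∉ W e) (hf : EnumName f E)
    {e : ℕ} :
    (∃ m, Discharged g e (prefB (chi zeroJJ) m) (pref f m)) ↔ W e = Set.univ ∨ ¬ E ⊆ W e := by
  simp only [Discharged, getElem?_prefB_eq_some_true, chi_eq_true, mem_pref, length_prefB]
  constructor
  · rintro ⟨m, ⟨-, he⟩ | ⟨n, -, ⟨-, hgn⟩, j, -, hj⟩⟩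
    · exact Or.inl he
    · refine Or.inr fun hsub => (hg e n).1 hgn (hsub ?_)
      rw [hf]
      exact ⟨j, hj⟩
  · rintro (he | hE)
    · exact ⟨e + 1, Or.inl ⟨by omega, he⟩⟩
    · obtain ⟨n, hnE, hnW⟩ := Set.not_subset.1 hE
      rw [hf] at hnE
      obtain ⟨j, hj⟩ := hnE
      refine ⟨max (g e n + 1) (max (j + 1) (n + 1)), Or.inr ⟨n, ?_, ⟨?_, (hg e n).2 hnW⟩, j, ?_, hj⟩⟩
      all_goals omega

theorem eventually_discharged (hg : ∀ e n, W (g e n) = Set.univ ↔ n ∉ W e) (hf : EnumName f E)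
    {e : ℕ} (he : W e = Set.univ ∨ ¬ E ⊆ W e) :
    ∀ᶠ m in atTop, Discharged g e (prefB (chi zeroJJ) m) (pref f m) := by
  obtain ⟨m₀, hm₀⟩ := (exists_discharged_iff hg hf).2 he
  refine eventually_atTop.2 ⟨m₀, fun m hm => hm₀.mono ?_ ?_⟩ <;>
    exact (List.range_prefix_range hm).map _

theorem eq_univ_iff_exists_semidecider_eq_some (hg : ∀ e n, W (g e n) = Set.univ ↔ n ∉ W e)
    (hE : ∃ e, W e = E) {k : ℕ} (hk : KW E ≤ k) (hf : EnumName f E) :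
    E = Set.univ ↔ ∃ m, semidecider g k (prefB (chi zeroJJ) m) (pref f m) = some () := by
  simp only [semidecider_eq_some_iff]
  constructor
  · rintro rfl
    have hall : ∀ᶠ m in atTop, ∀ e ∈ Set.Iio (2 ^ k),
        Discharged g e (prefB (chi zeroJJ) m) (pref f m) :=
      (eventually_all_finite (Set.finite_Iio _)).2 fun e _ =>
        eventually_discharged hg hf (by rw [Set.univ_subset_iff]; exact (em _).imp id id)
    exact hall.exists
  · rintro ⟨m, hm⟩
    obtain ⟨e, he, rfl⟩ := exists_W_eq_of_KW_le hE hk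
    exact ((exists_discharged_iff hg hf).1 ⟨m, hm e he⟩).resolve_right (not_not.2 subset_rfl)

end Oracle

/-- The class `{ℕ} ⊆ P(ℕ)` is K-semidecidable relative to `∅″` (an oracle machine with
oracle `∅″`, given a bound `k ≥ K(E)` and an enumeration of `E`, halts iff `E = ℕ`),
but it is not Type-2-semidecidable relative to any oracle (no monotone — not even
computable — functional on enumerations semidecides it). -/
theorem stmt13 :
    (∃ M : ℕ → List Bool → List ℕ → Option Unit,
      Computable (fun p : ℕ × List Bool × List ℕ => M p.1 p.2.1 p.2.2) ∧
      (∀ k l₁ l₂ l₁' l₂' v, M k l₁ l₂ = some v → M k (l₁ ++ l₁') (l₂ ++ l₂') = some v) ∧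
      ∀ E : Set ℕ, (∃ e, W e = E) → ∀ k, KW E ≤ k → ∀ f : ℕ → ℕ, EnumName f E →
        (E = Set.univ ↔ ∃ m, M k (prefB (chi zeroJJ) m) (pref f m) = some ())) ∧
    (¬ ∃ M : List ℕ → Option Unit,
      (∀ l l' v, M l = some v → M (l ++ l') = some v) ∧
      ∀ E : Set ℕ, (∃ e, W e = E) → ∀ f : ℕ → ℕ, EnumName f E →
        (E = Set.univ ↔ ∃ m, M (pref f m) = some ())) := by
  refine ⟨?_, ?_⟩
  · obtain ⟨g, hg, hred⟩ := exists_primrec₂_W_eq_univ_iff_not_mem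
    exact ⟨semidecider g, computable_semidecider g hg, fun _ _ _ _ _ _ => semidecider_append g,
      fun E hE k hk f hf => eq_univ_iff_exists_semidecider_eq_some hred hE hk hf⟩
  · rintro ⟨M, -, hM⟩
    obtain ⟨m, hm⟩ := (hM _ exists_W_eq_univ _ enumName_succ_univ).1 rfl
    have hpref : pref (fun j => if j < m then j + 1 else 0) m = pref (· + 1) m :=
      List.map_congr_left fun j hj => if_pos (List.mem_range.1 hj)
    have hIio := (hM _ (exists_W_eq_Iio m) _ (enumName_Iio m)).2 ⟨m, hpref ▸ hm⟩
    exact lt_irrefl m (hIio.symm ▸ Set.mem_univ m : m ∈ Set.Iio m)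
end
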